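/- arXiv:1011.4698 — 5 statements merged into one kernel-verified Lean document; each statement's English description precedes it below -/
import Mathlib

section
/- I^{n+1} ⊆ J but I^n ⊄ J. (Thus, in the notation of the paper, the integer m with I^m ⊄ J and I^{m+1} ⊆ J equals n for the local model of a cuspidal structure of type C_{2,n}.) -/
/-!
Write `K = (x, y)` and `Z = (z₁, …, z_r)`, so that `I = K + Z` with `Z ⊆ J`; then
`I^(n+1) ⊆ K^(n+1) + Z` reduces the inclusion to `K^(n+1) ⊆ J`. Since `xy ∈ J`, every monomial
of degree `n + 1` in `x, y` other than `x^(n+1)` and `y^(n+1)` lies in `J`, and these two do as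
well: `x^(n+1) = x(y² + xⁿ) - y·xy` and `y^(n+1) = y^(n-1)(y² + xⁿ) - x^(n-1)y^(n-2)·xy`.

For `xⁿ ∉ J`, the functional `p ↦ [xⁿ]p - [y²]p` kills every multiple of each generator of `J`
(the monomials `y²` and `xⁿ` are divisible neither by `xy` nor by any `zᵢ`, and
`[xⁿ](p(y² + xⁿ)) = p(0) = [y²](p(y² + xⁿ))`), hence all of `J`, but not `xⁿ`.
-/

open MvPowerSeries Finsupp

namespace Ideal

variable {R : Type*} [CommSemiring R]

theorem sup_pow_le_of_le {K Z J : Ideal R} {m : ℕ} (hK : K ^ m ≤ J) (hZ : Z ≤ J) :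
    (K ⊔ Z) ^ m ≤ J := by
  rw [← add_eq_sup, add_pow, sum_eq_sup]
  refine Finset.sup_le fun i hi => mul_le_left.trans ?_
  rcases eq_or_ne i m with rfl | him
  · simpa using hK
  · have him : i < m := lt_of_le_of_ne (Nat.lt_succ_iff.mp (Finset.mem_range.mp hi)) him
    exact mul_le_right.trans ((pow_le_self (Nat.sub_ne_zero_of_lt him)).trans hZ)

theorem span_pair_pow_le {x y : R} {J : Ideal R} {m : ℕ} (hxy : x * y ∈ J) (hx : x ^ m ∈ J)
    (hy : y ^ m ∈ J) : span {x, y} ^ m ≤ J := by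
  rw [span_insert, ← add_eq_sup, add_pow, sum_eq_sup]
  refine Finset.sup_le fun i hi => mul_le_left.trans ?_
  rw [span_singleton_pow, span_singleton_pow, span_singleton_mul_span_singleton,
    span_singleton_le_iff_mem]
  have hi : i ≤ m := Nat.lt_succ_iff.mp (Finset.mem_range.mp hi)
  rcases Nat.eq_zero_or_pos i with rfl | hi0
  · simpa using hy
  rcases eq_or_lt_of_le hi with rfl | him
  · simpa using hx
  obtain ⟨a, rfl⟩ := Nat.exists_eq_add_one_of_ne_zero hi0.ne'
  obtain ⟨b, rfl⟩ := Nat.exists_eq_add_of_lt him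
  rw [show a + 1 + b + 1 - (a + 1) = b + 1 by omega,
    show x ^ (a + 1) * y ^ (b + 1) = x ^ a * y ^ b * (x * y) by ring]
  exact J.mul_mem_left _ hxy

end Ideal

section Cusp

variable {R : Type*} [CommRing R]

theorem pow_succ_mem_span_cusp_left (x y : R) (n : ℕ) :
    x ^ (n + 1) ∈ Ideal.span {y ^ 2 + x ^ n, x * y} := by
  rw [show x ^ (n + 1) = x * (y ^ 2 + x ^ n) - y * (x * y) by ring]
  exact sub_mem (Ideal.mul_mem_left _ _ (Ideal.subset_span (by simp)))
    (Ideal.mul_mem_left _ _ (Ideal.subset_span (by simp)))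

theorem pow_succ_mem_span_cusp_right (x y : R) {n : ℕ} (hn : 2 ≤ n) :
    y ^ (n + 1) ∈ Ideal.span {y ^ 2 + x ^ n, x * y} := by
  obtain ⟨m, rfl⟩ := Nat.exists_eq_add_of_le' hn
  rw [show y ^ (m + 2 + 1) = y ^ (m + 1) * (y ^ 2 + x ^ (m + 2)) - x ^ (m + 1) * y ^ m * (x * y)
    by ring]
  exact sub_mem (Ideal.mul_mem_left _ _ (Ideal.subset_span (by simp)))
    (Ideal.mul_mem_left _ _ (Ideal.subset_span (by simp)))

theorem span_pow_succ_le_span_cusp (x y : R) (s : Set R) {n : ℕ} (hn : 2 ≤ n) :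
    Ideal.span ({x, y} ∪ s) ^ (n + 1) ≤ Ideal.span ({y ^ 2 + x ^ n, x * y} ∪ s) := by
  have hcusp : Ideal.span {y ^ 2 + x ^ n, x * y} ≤ Ideal.span ({y ^ 2 + x ^ n, x * y} ∪ s) :=
    Ideal.span_mono Set.subset_union_left
  rw [Ideal.span_union]
  refine Ideal.sup_pow_le_of_le (Ideal.span_pair_pow_le ?_ ?_ ?_)
    (Ideal.span_mono Set.subset_union_right)
  · exact Ideal.subset_span (by simp)
  · exact hcusp (pow_succ_mem_span_cusp_left x y n)
  · exact hcusp (pow_succ_mem_span_cusp_right x y hn)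

end Cusp

namespace AddMonoidHom

variable {A M : Type*} [Semiring A] [AddCommMonoid M]

def kerIdeal (φ : A →+ M) : Ideal A where
  carrier := {q | ∀ p, φ (p * q) = 0}
  add_mem' {a b} ha hb p := by simp only [mul_add, map_add, ha p, hb p, add_zero]
  zero_mem' p := by simp
  smul_mem' c q hq p := by simpa only [smul_eq_mul, ← mul_assoc] using hq (p * c)

theorem mem_kerIdeal {φ : A →+ M} {q : A} : q ∈ φ.kerIdeal ↔ ∀ p, φ (p * q) = 0 :=
  Iff.rfl

theorem notMem_kerIdeal_of_apply_ne_zero {φ : A →+ M} {q : A} (h : φ q ≠ 0) :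
    q ∉ φ.kerIdeal :=
  fun hq => h (by simpa using mem_kerIdeal.mp hq 1)

end AddMonoidHom

namespace MvPowerSeries

section CommSemiring

variable {σ k : Type*} [CommSemiring k]

theorem coeff_mul_X_pow_of_lt {d : σ →₀ ℕ} {i : σ} {m : ℕ} (h : d i < m)
    (p : MvPowerSeries σ k) : coeff d (p * X i ^ m) = 0 := by
  rw [X_pow_eq, coeff_mul_monomial, if_neg (by rw [single_le_iff]; omega)]

theorem coeff_mul_X_of_eq_zero {d : σ →₀ ℕ} {i : σ} (h : d i = 0) (p : MvPowerSeries σ k) :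
    coeff d (p * X i) = 0 := by
  simpa using coeff_mul_X_pow_of_lt (m := 1) (by omega) p

theorem coeff_single_mul_X_pow (i : σ) (m : ℕ) (p : MvPowerSeries σ k) :
    coeff (single i m) (p * X i ^ m) = constantCoeff p := by
  rw [X_pow_eq, coeff_mul_monomial, if_pos le_rfl, tsub_self, mul_one,
    coeff_zero_eq_constantCoeff_apply]

end CommSemiring

theorem X_pow_notMem_span_cusp {σ k ι : Type*} [CommRing k] [Nontrivial k]
    {i j : σ} (hij : i ≠ j) {n : ℕ} (hn : n ≠ 0) {f : ι → σ} (hfi : ∀ l, f l ≠ i)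
    (hfj : ∀ l, f l ≠ j) :
    (X i : MvPowerSeries σ k) ^ n ∉
      Ideal.span ({X j ^ 2 + X i ^ n, X i * X j} ∪ Set.range fun l => X (f l)) := by
  set φ : MvPowerSeries σ k →+ k :=
    (coeff (single i n) - coeff (single j 2) : MvPowerSeries σ k →ₗ[k] k).toAddMonoidHom
  have hφ : ∀ p, φ p = coeff (single i n) p - coeff (single j 2) p := fun _ => rfl
  have hji : (single j 2) i < n := by simpa [hij] using Nat.pos_of_ne_zero hn
  suffices h : Ideal.span ({X j ^ 2 + X i ^ n, X i * X j} ∪ Set.range fun l => X (f l)) ≤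
      φ.kerIdeal by
    refine fun hmem => φ.notMem_kerIdeal_of_apply_ne_zero ?_ (h hmem)
    rw [hφ, ← one_mul (X i ^ n), coeff_single_mul_X_pow,
      coeff_mul_X_pow_of_lt hji]
    simp
  rw [Ideal.span_le]
  rintro q ((rfl | rfl) | ⟨l, rfl⟩) <;> refine AddMonoidHom.mem_kerIdeal.mpr fun p => ?_ <;>
    rw [hφ]
  · rw [mul_add, map_add, map_add, coeff_single_mul_X_pow, coeff_single_mul_X_pow,
      coeff_mul_X_pow_of_lt (by simp [hij.symm]), coeff_mul_X_pow_of_lt hji]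
    simp
  · rw [← mul_assoc, coeff_mul_X_of_eq_zero (by simp [hij.symm]), mul_right_comm,
      coeff_mul_X_of_eq_zero (by simp [hij]), sub_zero]
  · rw [coeff_mul_X_of_eq_zero (by simp [(hfi l).symm]),
      coeff_mul_X_of_eq_zero (by simp [(hfj l).symm]), sub_zero]

end MvPowerSeries

/-- For the local model `J = (y² + xⁿ, xy, z₁, …, z_r)` of a cuspidal multiple
structure of type `C_{2,n}` (with `n ≥ 3`) on the smooth germ cut out by
`I = (x, y, z₁, …, z_r)` in `R = k[[x, y, z₁, …, z_r]]`, one has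
`I^(n+1) ⊆ J` but `I^n ⊄ J`. -/
theorem stmt_0 (k : Type) [Field k] (n r : ℕ) (hn : 3 ≤ n)
    (x y : MvPowerSeries (Fin (r + 2)) k) (z : Fin r → MvPowerSeries (Fin (r + 2)) k)
    (hx : x = MvPowerSeries.X 0) (hy : y = MvPowerSeries.X 1)
    (hz : ∀ i : Fin r, z i = MvPowerSeries.X i.succ.succ)
    (I J : Ideal (MvPowerSeries (Fin (r + 2)) k))
    (hI : I = Ideal.span ({x, y} ∪ Set.range z))
    (hJ : J = Ideal.span ({y ^ 2 + x ^ n, x * y} ∪ Set.range z)) :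
    I ^ (n + 1) ≤ J ∧ ¬ I ^ n ≤ J := by
  obtain rfl : z = fun i : Fin r => X i.succ.succ := funext hz
  subst hx hy hI hJ
  refine ⟨span_pow_succ_le_span_cusp (X 0) (X 1) _ (by omega), fun h => ?_⟩
  have hx_mem : (X 0 : MvPowerSeries (Fin (r + 2)) k) ∈
      Ideal.span ({X 0, X 1} ∪ Set.range fun i : Fin r => X i.succ.succ) :=
    Ideal.subset_span (Set.mem_union_left _ (Set.mem_insert _ _))
  exact X_pow_notMem_span_cusp zero_ne_one (by omega) (fun i => Fin.succ_ne_zero _)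
    Fin.succ_succ_ne_one (h (Ideal.pow_mem_pow hx_mem n))
end

section
/- J : I = (xⁿ, xy, y², z₁, …, z_r); for every ℓ with 2 ≤ ℓ ≤ n one has J : I^ℓ = (x^{n+1−ℓ}, y, z₁, …, z_r); and J : I^{n+1} = R. -/
/-!
Apart from `J`, every ideal in sight is a monomial ideal, and in a power series ring an element
lies in a monomial ideal iff its coefficients vanish at all monomials that are multiples of no
generator. For `I = (x, y, z)`, taking the colon by `I` therefore just lowers the bound on the
`x`-exponent: `(xᵐ⁺¹, y, z) : I = (xᵐ, y, z)` and `(xⁿ, xy, y², z) : I = (xⁿ⁻¹, y, z)`.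

`J` matters only in the first step, `J : I = (xⁿ, xy, y², z)`. `J` is contained in
`M = (xⁿ, xy, y², z)`, and the `y²`- and `xⁿ`-coefficients agree on `J`: multiplying an element
of `M` by `g` scales both coefficients by `g(0)`, because no generator of `M` lies strictly below
`y²` or `xⁿ`. So if `f x, f y ∈ J`, the coefficient of `xⁿ⁻¹` in `f` equals the `y²`-coefficient
of `f x`, which is `0`, and likewise the coefficient of `y` in `f` is `0`. The remaining
statements follow from `J : I^(ℓ+1) = (J : I^ℓ) : I`.
-/

open Finsupp

namespace MvPowerSeries

variable {σ R : Type*} [CommRing R]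

theorem coeff_eq_zero_of_mem_span_monomial {S : Set (σ →₀ ℕ)} {f : MvPowerSeries σ R}
    (hf : f ∈ Ideal.span ((monomial · (1 : R)) '' S)) {e : σ →₀ ℕ} (he : ∀ d ∈ S, ¬d ≤ e) :
    coeff e f = 0 := by
  classical
  induction hf using Submodule.span_induction generalizing e with
  | mem g hg =>
    obtain ⟨d, hd, rfl⟩ := hg
    rw [coeff_monomial, if_neg]
    rintro rfl
    exact he e hd le_rfl
  | zero => exact map_zero _
  | add g h _ _ hg hh => rw [map_add, hg he, hh he, add_zero]
  | smul a g _ hg =>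
    rw [smul_eq_mul, coeff_mul]
    refine Finset.sum_eq_zero fun p hp => ?_
    have hpe : p.2 ≤ e := (Finset.HasAntidiagonal.mem_antidiagonal.1 hp) ▸ le_add_self
    rw [hg fun d hd hdp => he d hd (hdp.trans hpe), mul_zero]

theorem mem_span_monomial_of_coeff_eq_zero {S : Set (σ →₀ ℕ)} (hS : S.Finite)
    {f : MvPowerSeries σ R} (hf : ∀ e, (∀ d ∈ S, ¬d ≤ e) → coeff e f = 0) :
    f ∈ Ideal.span ((monomial · (1 : R)) '' S) := by
  induction S, hS using Set.Finite.induction_on generalizing f with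
  | empty =>
    rw [show f = 0 from ext fun e => by simpa using hf e]
    exact zero_mem _
  | @insert d S _ _ ih =>
    set g : MvPowerSeries σ R := fun e => coeff (e + d) f
    have hg (e : σ →₀ ℕ) : coeff e g = coeff (e + d) f := rfl
    have hrest : f - monomial d 1 * g ∈ Ideal.span ((monomial · (1 : R)) '' S) := by
      refine ih fun e he => ?_
      rw [map_sub, coeff_monomial_mul]
      split_ifs with hde
      · rw [one_mul, hg, tsub_add_cancel_of_le hde, sub_self]
      · rw [sub_zero]
        exact hf e (Set.forall_mem_insert.2 ⟨hde, he⟩)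
    rw [Set.image_insert_eq, ← add_sub_cancel (monomial d 1 * g) f]
    exact add_mem (Ideal.mul_mem_right _ _ (Ideal.subset_span (Set.mem_insert _ _)))
      (Ideal.span_mono (Set.subset_insert _ _) hrest)

theorem mem_span_monomial_iff {S : Set (σ →₀ ℕ)} (hS : S.Finite) {f : MvPowerSeries σ R} :
    f ∈ Ideal.span ((monomial · (1 : R)) '' S) ↔ ∀ e, (∀ d ∈ S, ¬d ≤ e) → coeff e f = 0 :=
  ⟨fun hf _ he => coeff_eq_zero_of_mem_span_monomial hf he,
    mem_span_monomial_of_coeff_eq_zero hS⟩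

theorem coeff_mul_eq_constantCoeff_mul_of_mem_span_monomial {S : Set (σ →₀ ℕ)}
    {f : MvPowerSeries σ R} (hf : f ∈ Ideal.span ((monomial · (1 : R)) '' S)) {e : σ →₀ ℕ}
    (he : ∀ d ∈ S, ¬d < e) (g : MvPowerSeries σ R) :
    coeff e (g * f) = constantCoeff g * coeff e f := by
  classical
  rw [coeff_mul, Finset.sum_eq_single (0, e), ← coeff_zero_eq_constantCoeff_apply]
  · rintro ⟨a, b⟩ hab hne
    rw [Finset.HasAntidiagonal.mem_antidiagonal] at hab
    dsimp only at hab ⊢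
    have hbe : b < e := lt_of_le_of_ne (hab ▸ le_add_self) fun hb => hne <| by
      subst hb; rw [add_eq_right.1 hab]
    rw [coeff_eq_zero_of_mem_span_monomial hf fun d hd hdb => he d hd (hdb.trans_lt hbe),
      mul_zero]
  · simp

theorem coeff_single_add_one_mul_X (f : MvPowerSeries σ R) (s : σ) (j : ℕ) :
    coeff (single s (j + 1)) (f * X s) = coeff (single s j) f := by
  rw [single_add, X_def, coeff_add_mul_monomial, mul_one]

theorem coeff_single_mul_X_of_ne (f : MvPowerSeries σ R) {s t : σ} (h : t ≠ s) (j : ℕ) :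
    coeff (single t j) (f * X s) = 0 := by
  rw [X_def, coeff_mul_monomial, if_neg]
  rw [single_le_iff, single_eq_of_ne' h]
  exact Nat.not_succ_le_zero 0

end MvPowerSeries

namespace Ideal

variable {R : Type*} [CommRing R]

theorem colon_mul (J A B : Ideal R) :
    J.colon (↑(A * B) : Set R) = (J.colon (A : Set R)).colon (B : Set R) := by
  ext f
  simp only [Submodule.mem_colon, smul_eq_mul]
  refine ⟨fun hf b hb a ha => mul_right_comm f b a ▸ mul_assoc f a b ▸ hf _ (mul_mem_mul ha hb),
    fun hf p hp => ?_⟩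
  have hAB : A * B ≤ J.colon {f} := mul_le.2 fun a ha b hb => by
    rw [Submodule.mem_colon_singleton, smul_eq_mul, mul_comm (a * b), ← mul_assoc, mul_right_comm]
    exact hf b hb a ha
  simpa [mul_comm] using hAB hp

theorem span_union_le_colon_span_union {J : Ideal R} {A S Z : Set R} (hZ : Z ⊆ J)
    (h : ∀ a ∈ A, ∀ s ∈ S, a * s ∈ J) :
    span (A ∪ Z) ≤ J.colon (span (S ∪ Z) : Set R) := by
  rw [colon_span, span_le]
  intro a ha
  rw [SetLike.mem_coe, Submodule.mem_colon]
  rintro s hs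
  rcases ha with ha | ha <;> rcases hs with hs | hs
  · exact h a ha s hs
  · exact J.mul_mem_left a (hZ hs)
  · exact J.mul_mem_right s (hZ ha)
  · exact J.mul_mem_right s (hZ ha)

end Ideal

open MvPowerSeries

namespace CuspidalColon

variable (k : Type*) [CommRing k] (r : ℕ)

def zVars : Set (MvPowerSeries (Fin (r + 2)) k) := Set.range fun i : Fin r => X i.succ.succ

def zExps : Set (Fin (r + 2) →₀ ℕ) := Set.range fun i : Fin r => single i.succ.succ 1

noncomputable def xPowIdeal (m : ℕ) : Ideal (MvPowerSeries (Fin (r + 2)) k) :=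
  Ideal.span ({X 0 ^ m, X 1} ∪ zVars k r)

noncomputable def cuspColonIdeal (n : ℕ) : Ideal (MvPowerSeries (Fin (r + 2)) k) :=
  Ideal.span ({X 0 ^ n, X 0 * X 1, X 1 ^ 2} ∪ zVars k r)

noncomputable def cuspIdeal (n : ℕ) : Ideal (MvPowerSeries (Fin (r + 2)) k) :=
  Ideal.span ({X 1 ^ 2 + X 0 ^ n, X 0 * X 1} ∪ zVars k r)

def cuspColonExps (n : ℕ) : Set (Fin (r + 2) →₀ ℕ) :=
  {single 0 n, single 0 1 + single 1 1, single 1 2}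

variable {k r}

theorem zExps_finite : (zExps r).Finite :=
  Set.finite_range _

theorem cuspColonExps_finite {n : ℕ} : (cuspColonExps r n).Finite :=
  ((Set.finite_singleton _).insert _).insert _

theorem image_monomial_zExps : (monomial · (1 : k)) '' zExps r = zVars k r := by
  rw [zExps, ← Set.range_comp]
  rfl

theorem xPowIdeal_eq_span_monomial (m : ℕ) :
    xPowIdeal k r m = Ideal.span ((monomial · 1) '' ({single 0 m, single 1 1} ∪ zExps r)) := by
  rw [Set.image_union, image_monomial_zExps, Set.image_insert_eq, Set.image_singleton,
    ← X_pow_eq, ← X_def]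
  rfl

theorem cuspColonIdeal_eq_span_monomial (n : ℕ) :
    cuspColonIdeal k r n = Ideal.span ((monomial · 1) '' (cuspColonExps r n ∪ zExps r)) := by
  have hxy : (monomial (single 0 1 + single 1 1) 1 : MvPowerSeries (Fin (r + 2)) k) =
      X 0 * X 1 := by
    rw [X_def, X_def, monomial_mul_monomial, one_mul]
  rw [Set.image_union, image_monomial_zExps, cuspColonExps, Set.image_insert_eq,
    Set.image_insert_eq, Set.image_singleton, ← X_pow_eq, ← X_pow_eq, hxy]
  rfl

theorem eq_single_zero_add_single_one {e : Fin (r + 2) →₀ ℕ}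
    (he : ∀ i : Fin r, e i.succ.succ = 0) : e = single 0 (e 0) + single 1 (e 1) := by
  ext a
  induction a using Fin.cases with
  | zero => simp
  | succ b => induction b using Fin.cases with
    | zero => simp
    | succ i => simp [he, Fin.ext_iff]

theorem single_zero_add_single_one_le_iff {p q a b : ℕ} :
    (single 0 p + single 1 q : Fin (r + 2) →₀ ℕ) ≤ single 0 a + single 1 b ↔ p ≤ a ∧ q ≤ b :=
  ⟨fun h => ⟨by simpa using h 0, by simpa using h 1⟩,
    fun ⟨hpa, hqb⟩ => add_le_add (single_le_single.2 hpa) (single_le_single.2 hqb)⟩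

theorem forall_not_le_union_zExps_iff {S : Set (Fin (r + 2) →₀ ℕ)} {e : Fin (r + 2) →₀ ℕ} :
    (∀ d ∈ S ∪ zExps r, ¬d ≤ e) ↔ (∀ d ∈ S, ¬d ≤ e) ∧ ∀ i : Fin r, e i.succ.succ = 0 := by
  simp [zExps, or_imp, forall_and, single_le_iff]

theorem mem_span_monomial_union_zExps_iff {S : Set (Fin (r + 2) →₀ ℕ)} (hS : S.Finite)
    {f : MvPowerSeries (Fin (r + 2)) k} :
    f ∈ Ideal.span ((monomial · (1 : k)) '' (S ∪ zExps r)) ↔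
      ∀ a b, (∀ d ∈ S, ¬d ≤ single 0 a + single 1 b) → coeff (single 0 a + single 1 b) f = 0 := by
  rw [mem_span_monomial_iff (hS.union zExps_finite)]
  refine ⟨fun hf a b hab => hf _ (forall_not_le_union_zExps_iff.2 ⟨hab, fun i => ?_⟩),
    fun hf e he => ?_⟩
  · simp [Fin.ext_iff]
  · obtain ⟨hS, hz⟩ := forall_not_le_union_zExps_iff.1 he
    rw [eq_single_zero_add_single_one hz] at hS ⊢
    exact hf _ _ hS

theorem mem_xPowIdeal_iff {m : ℕ} {f : MvPowerSeries (Fin (r + 2)) k} :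
    f ∈ xPowIdeal k r m ↔ ∀ j < m, coeff (single 0 j) f = 0 := by
  rw [xPowIdeal_eq_span_monomial, mem_span_monomial_union_zExps_iff (Set.toFinite _)]
  simp [single_le_iff]

theorem mem_cuspColonIdeal_iff {n : ℕ} (hn : 1 ≤ n) {f : MvPowerSeries (Fin (r + 2)) k} :
    f ∈ cuspColonIdeal k r n ↔
      (∀ j < n, coeff (single 0 j) f = 0) ∧ coeff (single 1 1) f = 0 := by
  rw [cuspColonIdeal_eq_span_monomial, mem_span_monomial_union_zExps_iff cuspColonExps_finite]
  simp only [cuspColonExps, Set.mem_insert_iff, Set.mem_singleton_iff, forall_eq_or_imp,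
    single_le_iff, coe_add, Pi.add_apply, single_eq_same, ne_eq, zero_ne_one, not_false_eq_true,
    single_eq_of_ne, add_zero, not_le, single_zero_add_single_one_le_iff, not_and,
    Order.lt_one_iff, forall_eq, one_ne_zero, zero_add, Order.lt_two_iff, and_imp]
  constructor
  · intro h
    exact ⟨fun j hj => by simpa using h j 0 hj (fun _ => rfl) zero_le_one,
      by simpa using h 0 1 hn (by omega) le_rfl⟩
  · rintro ⟨hx, hy⟩ a b ha hab hb
    obtain rfl | rfl : b = 0 ∨ b = 1 := by omega
    · simpa using hx a ha
    · obtain rfl : a = 0 := by omega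
      simpa using hy

theorem not_lt_of_mem_cuspColonExps_union_zExps {n : ℕ} (hn : 1 ≤ n) {d : Fin (r + 2) →₀ ℕ}
    (hd : d ∈ cuspColonExps r n ∪ zExps r) : ¬d < single 0 n ∧ ¬d < single 1 2 := by
  rcases hd with (rfl | rfl | rfl) | ⟨i, rfl⟩
  · refine ⟨lt_irrefl _, fun h => ?_⟩
    have h0 := single_le_iff.1 h.le
    simp only [ne_eq, zero_ne_one, not_false_eq_true, single_eq_of_ne] at h0
    omega
  · exact ⟨fun h => by simpa using Finsupp.le_def.1 h.le 1,
      fun h => by simpa using Finsupp.le_def.1 h.le 0⟩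
  · exact ⟨fun h => by simpa using single_le_iff.1 h.le, lt_irrefl _⟩
  · exact ⟨fun h => by simpa [Fin.ext_iff] using single_le_iff.1 h.le,
      fun h => by simpa [Fin.ext_iff] using single_le_iff.1 h.le⟩

theorem cuspIdeal_le_cuspColonIdeal (n : ℕ) : cuspIdeal k r n ≤ cuspColonIdeal k r n := by
  rw [cuspIdeal, Ideal.span_le]
  rintro g ((rfl | rfl) | hz)
  · exact add_mem (Ideal.subset_span (by simp)) (Ideal.subset_span (by simp))
  · exact Ideal.subset_span (by simp)
  · exact Ideal.subset_span (Or.inr hz)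

theorem coeff_ySq_eq_coeff_xPow_of_mem_cuspIdeal {n : ℕ} (hn : 1 ≤ n)
    {f : MvPowerSeries (Fin (r + 2)) k} (hf : f ∈ cuspIdeal k r n) :
    coeff (single 1 2) f = coeff (single 0 n) f := by
  induction hf using Submodule.span_induction with
  | mem g hg =>
    rcases hg with (rfl | rfl) | ⟨i, rfl⟩
    · simp [X_pow_eq, coeff_monomial, single_eq_single_iff]
    · rw [coeff_single_mul_X_of_ne _ zero_ne_one, mul_comm, coeff_single_mul_X_of_ne _ one_ne_zero]
    · simp [X_def, coeff_monomial, single_eq_single_iff, Fin.ext_iff]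
  | zero => simp
  | add g h _ _ hg hh => rw [map_add, map_add, hg, hh]
  | smul a g hg ih =>
    have hgM := cuspIdeal_le_cuspColonIdeal n hg
    rw [cuspColonIdeal_eq_span_monomial] at hgM
    rw [smul_eq_mul,
      coeff_mul_eq_constantCoeff_mul_of_mem_span_monomial hgM
        (fun d hd => (not_lt_of_mem_cuspColonExps_union_zExps hn hd).2) a,
      coeff_mul_eq_constantCoeff_mul_of_mem_span_monomial hgM
        (fun d hd => (not_lt_of_mem_cuspColonExps_union_zExps hn hd).1) a, ih]

theorem X_zero_mem_xPowIdeal_one : (X 0 : MvPowerSeries (Fin (r + 2)) k) ∈ xPowIdeal k r 1 :=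
  Ideal.subset_span (by simp)

theorem X_one_mem_xPowIdeal (m : ℕ) : (X 1 : MvPowerSeries (Fin (r + 2)) k) ∈ xPowIdeal k r m :=
  Ideal.subset_span (by simp)

theorem mem_xPowIdeal_of_mul_X_zero_mem {m : ℕ} {f : MvPowerSeries (Fin (r + 2)) k}
    (hf : f * X 0 ∈ xPowIdeal k r (m + 1)) : f ∈ xPowIdeal k r m :=
  mem_xPowIdeal_iff.2 fun j hj => by
    rw [← coeff_single_add_one_mul_X]
    exact mem_xPowIdeal_iff.1 hf (j + 1) (by omega)

theorem cuspColonIdeal_le_xPowIdeal (n : ℕ) : cuspColonIdeal k r n ≤ xPowIdeal k r n := by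
  rw [cuspColonIdeal, Ideal.span_le]
  rintro g ((rfl | rfl | rfl) | hz)
  · exact Ideal.subset_span (by simp)
  · exact Ideal.mul_mem_left _ _ (X_one_mem_xPowIdeal n)
  · exact Ideal.pow_mem_of_mem _ (X_one_mem_xPowIdeal n) 2 two_pos
  · exact Ideal.subset_span (Or.inr hz)

theorem xPowIdeal_colon (m : ℕ) :
    (xPowIdeal k r (m + 1)).colon (xPowIdeal k r 1 : Set _) = xPowIdeal k r m := by
  refine le_antisymm (fun f hf => mem_xPowIdeal_of_mul_X_zero_mem
    (Submodule.mem_colon.1 hf _ X_zero_mem_xPowIdeal_one)) ?_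
  refine Ideal.span_union_le_colon_span_union (Set.subset_union_right.trans Ideal.subset_span) ?_
  simp only [Set.mem_insert_iff, Set.mem_singleton_iff, forall_eq_or_imp, forall_eq]
  refine ⟨⟨?_, ?_⟩, ?_, ?_⟩
  · exact Ideal.subset_span (by simp [pow_succ])
  · exact Ideal.mul_mem_left _ _ (X_one_mem_xPowIdeal _)
  · exact Ideal.mul_mem_right _ _ (X_one_mem_xPowIdeal _)
  · exact Ideal.mul_mem_right _ _ (X_one_mem_xPowIdeal _)

theorem cuspColonIdeal_colon {n : ℕ} (hn : 2 ≤ n) :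
    (cuspColonIdeal k r n).colon (xPowIdeal k r 1 : Set _) = xPowIdeal k r (n - 1) := by
  obtain ⟨m, rfl⟩ : ∃ m, n = m + 2 := ⟨n - 2, by omega⟩
  refine le_antisymm (fun f hf => mem_xPowIdeal_of_mul_X_zero_mem <| cuspColonIdeal_le_xPowIdeal _
    (Submodule.mem_colon.1 hf _ X_zero_mem_xPowIdeal_one)) ?_
  refine Ideal.span_union_le_colon_span_union (Set.subset_union_right.trans Ideal.subset_span) ?_
  have hxy : (X 0 * X 1 : MvPowerSeries (Fin (r + 2)) k) ∈ cuspColonIdeal k r (m + 2) :=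
    Ideal.subset_span (by simp)
  simp only [Set.mem_insert_iff, Set.mem_singleton_iff, forall_eq_or_imp, forall_eq]
  refine ⟨⟨?_, ?_⟩, ?_, ?_⟩
  · exact Ideal.subset_span (by simp [← pow_succ])
  · rw [show (X 0 ^ (m + 2 - 1) * X 1 : MvPowerSeries (Fin (r + 2)) k) = X 0 ^ m * (X 0 * X 1) by
      rw [show m + 2 - 1 = m + 1 by omega]; ring]
    exact Ideal.mul_mem_left _ _ hxy
  · rw [pow_one, mul_comm]
    exact hxy
  · rw [← pow_two]
    exact Ideal.subset_span (by simp)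

theorem cuspIdeal_colon {n : ℕ} (hn : 1 ≤ n) :
    (cuspIdeal k r n).colon (xPowIdeal k r 1 : Set _) = cuspColonIdeal k r n := by
  obtain ⟨m, rfl⟩ : ∃ m, n = m + 1 := ⟨n - 1, by omega⟩
  refine le_antisymm (fun f hf => ?_) ?_
  · have hx := Submodule.mem_colon.1 hf _ X_zero_mem_xPowIdeal_one
    have hy := Submodule.mem_colon.1 hf _ (X_one_mem_xPowIdeal 1)
    rw [smul_eq_mul] at hx hy
    have hxM := (mem_cuspColonIdeal_iff hn).1 (cuspIdeal_le_cuspColonIdeal _ hx)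
    refine (mem_cuspColonIdeal_iff hn).2 ⟨fun j hj => ?_, ?_⟩
    · rw [← coeff_single_add_one_mul_X]
      rcases (by omega : j + 1 < m + 1 ∨ j = m) with hj | rfl
      · exact hxM.1 _ hj
      · rw [← coeff_ySq_eq_coeff_xPow_of_mem_cuspIdeal hn hx,
          coeff_single_mul_X_of_ne _ one_ne_zero]
    · rw [← coeff_single_add_one_mul_X, coeff_ySq_eq_coeff_xPow_of_mem_cuspIdeal hn hy,
        coeff_single_mul_X_of_ne _ zero_ne_one]
  · refine Ideal.span_union_le_colon_span_union (Set.subset_union_right.trans Ideal.subset_span) ?_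
    have hp : (X 1 ^ 2 + X 0 ^ (m + 1) : MvPowerSeries (Fin (r + 2)) k) ∈ cuspIdeal k r (m + 1) :=
      Ideal.subset_span (by simp)
    have hxy : (X 0 * X 1 : MvPowerSeries (Fin (r + 2)) k) ∈ cuspIdeal k r (m + 1) :=
      Ideal.subset_span (by simp)
    simp only [Set.mem_insert_iff, Set.mem_singleton_iff, forall_eq_or_imp, forall_eq, pow_one]
    refine ⟨⟨?_, ?_⟩, ⟨?_, ?_⟩, ?_, ?_⟩
    · rw [show (X 0 ^ (m + 1) * X 0 : MvPowerSeries (Fin (r + 2)) k)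
        = X 0 * (X 1 ^ 2 + X 0 ^ (m + 1)) - X 1 * (X 0 * X 1) by ring]
      exact sub_mem (Ideal.mul_mem_left _ _ hp) (Ideal.mul_mem_left _ _ hxy)
    · rw [show (X 0 ^ (m + 1) * X 1 : MvPowerSeries (Fin (r + 2)) k) = X 0 ^ m * (X 0 * X 1) by
        ring]
      exact Ideal.mul_mem_left _ _ hxy
    · exact Ideal.mul_mem_right _ _ hxy
    · exact Ideal.mul_mem_right _ _ hxy
    · rw [show (X 1 ^ 2 * X 0 : MvPowerSeries (Fin (r + 2)) k) = X 1 * (X 0 * X 1) by ring]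
      exact Ideal.mul_mem_left _ _ hxy
    · rw [show (X 1 ^ 2 * X 1 : MvPowerSeries (Fin (r + 2)) k)
        = X 1 * (X 1 ^ 2 + X 0 ^ (m + 1)) - X 0 ^ m * (X 0 * X 1) by ring]
      exact sub_mem (Ideal.mul_mem_left _ _ hp) (Ideal.mul_mem_left _ _ hxy)

theorem cuspIdeal_colon_pow {n ℓ : ℕ} (hℓ : 2 ≤ ℓ) (hℓn : ℓ ≤ n) :
    (cuspIdeal k r n).colon (↑(xPowIdeal k r 1 ^ ℓ) : Set _) = xPowIdeal k r (n + 1 - ℓ) := by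
  induction ℓ, hℓ using Nat.le_induction with
  | base =>
    rw [pow_two, Ideal.colon_mul, cuspIdeal_colon (by omega), cuspColonIdeal_colon hℓn]
    rfl
  | succ ℓ hℓ ih =>
    rw [pow_succ, Ideal.colon_mul, ih (by omega), Nat.add_sub_add_right,
      show n + 1 - ℓ = n - ℓ + 1 by omega, xPowIdeal_colon]

theorem cuspIdeal_colon_pow_succ {n : ℕ} (hn : 2 ≤ n) :
    (cuspIdeal k r n).colon (↑(xPowIdeal k r 1 ^ (n + 1)) : Set _) = ⊤ := by
  rw [pow_succ, Ideal.colon_mul, cuspIdeal_colon_pow hn le_rfl, Nat.add_sub_cancel_left,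
    xPowIdeal_colon, Ideal.eq_top_iff_one]
  exact Ideal.subset_span (by simp)

end CuspidalColon

open CuspidalColon in
/-- Colon filtration of the local model of a `C_{2,n}` cuspidal structure:
`J : I = (xⁿ, xy, y², z)`, `J : I^ℓ = (x^{n+1−ℓ}, y, z)` for `2 ≤ ℓ ≤ n`, and
`J : I^{n+1} = R`. -/
theorem stmt_1 (k : Type) [Field k] (n r : ℕ) (hn : 3 ≤ n)
    (x y : MvPowerSeries (Fin (r + 2)) k) (z : Fin r → MvPowerSeries (Fin (r + 2)) k)
    (hx : x = MvPowerSeries.X 0) (hy : y = MvPowerSeries.X 1)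
    (hz : ∀ i : Fin r, z i = MvPowerSeries.X i.succ.succ)
    (I J : Ideal (MvPowerSeries (Fin (r + 2)) k))
    (hI : I = Ideal.span ({x, y} ∪ Set.range z))
    (hJ : J = Ideal.span ({y ^ 2 + x ^ n, x * y} ∪ Set.range z)) :
    Submodule.colon J (↑(I ^ 1) : Set (MvPowerSeries (Fin (r + 2)) k)) = Ideal.span ({x ^ n, x * y, y ^ 2} ∪ Set.range z) ∧
    (∀ ℓ : ℕ, 2 ≤ ℓ → ℓ ≤ n →
      Submodule.colon J (↑(I ^ ℓ) : Set (MvPowerSeries (Fin (r + 2)) k)) = Ideal.span ({x ^ (n + 1 - ℓ), y} ∪ Set.range z)) ∧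
    Submodule.colon J (↑(I ^ (n + 1)) : Set (MvPowerSeries (Fin (r + 2)) k)) = ⊤ := by
  obtain rfl : z = fun i => X i.succ.succ := funext hz
  have hI1 : I = xPowIdeal k r 1 := by rw [hI, hx, hy, xPowIdeal, pow_one]; rfl
  subst hI1 hJ hx hy
  exact ⟨by rw [pow_one]; exact cuspIdeal_colon (by omega),
    fun ℓ hℓ hℓn => cuspIdeal_colon_pow hℓ hℓn, cuspIdeal_colon_pow_succ (by omega)⟩
end

section
/- Set I_ℓ = J : I^{n+1−ℓ} for 1 ≤ ℓ ≤ n and I_{n+1} = J. Then I·I_ℓ ⊆ I_{ℓ+1} for all 1 ≤ ℓ ≤ n, so each quotient I_ℓ/I_{ℓ+1} is a k ≅ R/I-vector space, and: dim_k I_ℓ/I_{ℓ+1} = 1 for 1 ≤ ℓ ≤ n−2 (generated by the class of x^ℓ), dim_k I_{n−1}/I_n = 2 (generated by the classes of x^{n−1} and y), and dim_k I_n/I_{n+1} = 1. (These are the local ranks of the graded pieces L, L², …, L^{n−2}, E', Lⁿ of the module M(Y).) -/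
/-- For ideals `B ⊆ A` of `R`, the image of `A` in `R ⧸ B`, viewed as a
`k`-submodule of `R ⧸ B`; this represents the subquotient `A/B`. -/
noncomputable def gradedPiece (k : Type) [Field k] {R : Type} [CommRing R] [Algebra k R]
    (A B : Ideal R) : Submodule k (R ⧸ B) :=
  Submodule.restrictScalars k (A.map (Ideal.Quotient.mk B))

/-!
With `K_ℓ = (x^ℓ, y, z)` and `K = (xⁿ, xy, y², z)`, membership in these monomial ideals is read
off from the coefficients of `x^a` (and of `y`), while `J ⊆ K` and every element of `J` has equal
coefficients at `xⁿ` and `y²`. Since multiplication by `x^m` shifts `x`-coefficients, this gives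
`J : I^{n+1-ℓ} = K_ℓ` for `ℓ < n` and `J : I = K` (using `y` as well). The inclusions
`I·K_ℓ ⊆ K_{ℓ+1}`, `I·K_{n-1} ⊆ K`, `I·K ⊆ J` make each graded piece a `k`-space spanned by the
generators not already in the next ideal, and the same coefficients show they are independent.
-/

namespace MvPowerSeries

variable {σ R : Type*} [CommSemiring R]

theorem coeff_mul_of_coeff_lt_eq_zero {c f : MvPowerSeries σ R} {d : σ →₀ ℕ}
    (hf : ∀ e < d, coeff e f = 0) : coeff d (c * f) = constantCoeff c * coeff d f := by
  classical
  rw [coeff_mul, Finset.sum_eq_single (0, d)]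
  · simp
  · rintro ⟨p, q⟩ hpq hne
    rw [Finset.HasAntidiagonal.mem_antidiagonal] at hpq
    have hq : q < d := lt_of_le_of_ne (hpq ▸ le_add_self) fun h => hne (by
      subst h; simpa using hpq)
    rw [hf q hq, mul_zero]
  · simp

theorem coeff_add_mul_monomial_one (f : MvPowerSeries σ R) (d e : σ →₀ ℕ) :
    coeff (d + e) (f * monomial e 1) = coeff d f := by
  classical
  simp [coeff_mul_monomial]

theorem coeff_mul_monomial_one_of_not_le (f : MvPowerSeries σ R) {d e : σ →₀ ℕ} (h : ¬ e ≤ d) :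
    coeff d (f * monomial e 1) = 0 := by
  classical
  simp [coeff_mul_monomial, h]

theorem exists_le_of_mem_ideal_span_monomial_image {E : Set (σ →₀ ℕ)} {f : MvPowerSeries σ R}
    (hf : f ∈ Ideal.span ((fun e => monomial e (1 : R)) '' E)) :
    ∀ d, coeff d f ≠ 0 → ∃ e ∈ E, e ≤ d := by
  classical
  induction hf using Submodule.span_induction with
  | mem g hg =>
    obtain ⟨e, he, rfl⟩ := hg
    intro d hd
    refine ⟨e, he, le_of_eq ?_⟩
    by_contra hne
    exact hd (by simp [coeff_monomial, Ne.symm hne])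
  | zero => simp
  | add g h _ _ hg hh =>
    intro d hd
    by_cases hgd : coeff d g = 0
    · exact hh d (by simpa [hgd] using hd)
    · exact hg d hgd
  | smul c g _ hg =>
    intro d hd
    rw [smul_eq_mul, coeff_mul] at hd
    obtain ⟨⟨p, q⟩, hpq, hne⟩ := Finset.exists_ne_zero_of_sum_ne_zero hd
    obtain ⟨e, he, heq⟩ := hg q (right_ne_zero_of_mul hne)
    exact ⟨e, he, heq.trans ((Finset.HasAntidiagonal.mem_antidiagonal.1 hpq) ▸ le_add_self)⟩

theorem mem_ideal_span_monomial_image_of_forall_exists_le {E : Set (σ →₀ ℕ)} (hE : E.Finite)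
    {f : MvPowerSeries σ R} (hf : ∀ d, coeff d f ≠ 0 → ∃ e ∈ E, e ≤ d) :
    f ∈ Ideal.span ((fun e => monomial e (1 : R)) '' E) := by
  classical
  -- each exponent `d` is attributed to one generator `pick d` dividing it
  let pick : (σ →₀ ℕ) → σ →₀ ℕ := fun d => if h : ∃ e ∈ E, e ≤ d then h.choose else 0
  let q : (σ →₀ ℕ) → MvPowerSeries σ R := fun e d =>
    if pick (d + e) = e then coeff (d + e) f else 0
  have hq : ∀ e d, coeff d (q e) = if pick (d + e) = e then coeff (d + e) f else 0 :=
    fun _ _ => rfl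
  have hsum : f = ∑ e ∈ hE.toFinset, monomial e 1 * q e := by
    ext d
    rw [map_sum]
    by_cases hd : coeff d f = 0
    · refine ((Finset.sum_eq_zero fun e _ => ?_).trans hd.symm).symm
      rw [coeff_monomial_mul]
      split_ifs with hed
      · simp [hq, tsub_add_cancel_of_le hed, hd]
      · rfl
    have hex := hf d hd
    have hpick : pick d ∈ E ∧ pick d ≤ d := by
      simp only [pick, dif_pos hex]; exact hex.choose_spec
    rw [Finset.sum_eq_single (pick d)]
    · rw [coeff_monomial_mul, if_pos hpick.2, hq, tsub_add_cancel_of_le hpick.2]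
      simp
    · intro e _ hne
      rw [coeff_monomial_mul]
      split_ifs with hed
      · simp [hq, tsub_add_cancel_of_le hed, Ne.symm hne]
      · rfl
    · simp [hpick.1]
  rw [hsum]
  exact Ideal.sum_mem _ fun e he =>
    Ideal.mul_mem_right _ _ (Ideal.subset_span ⟨e, hE.mem_toFinset.1 he, rfl⟩)

theorem mem_ideal_span_monomial_image {E : Set (σ →₀ ℕ)} (hE : E.Finite)
    {f : MvPowerSeries σ R} :
    f ∈ Ideal.span ((fun e => monomial e (1 : R)) '' E) ↔
      ∀ d, coeff d f ≠ 0 → ∃ e ∈ E, e ≤ d :=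
  ⟨exists_le_of_mem_ideal_span_monomial_image, mem_ideal_span_monomial_image_of_forall_exists_le hE⟩

end MvPowerSeries

namespace Finsupp

theorem exists_eq_single_of_lt_single {σ : Type*} {e : σ →₀ ℕ} {s : σ} {m : ℕ}
    (h : e < single s m) : ∃ a < m, e = single s a := by
  classical
  have he : e = single s (e s) := by
    ext t
    by_cases hts : t = s
    · simp [hts]
    · have := h.le t
      simp only [single_apply, if_neg (Ne.symm hts)] at this ⊢
      omega
  refine ⟨e s, lt_of_le_of_ne (by simpa using h.le s) fun hm => h.ne ?_, he⟩
  rw [he, hm]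

end Finsupp

namespace Ideal

variable {R : Type*} [CommSemiring R]

theorem le_colon_of_mul_le {A B J : Ideal R} (h : A * B ≤ J) : A ≤ J.colon (B : Set R) :=
  fun _ hf => Submodule.mem_colon.2 fun _ hp => h (mul_mem_mul hf hp)

theorem pow_mul_le_of_forall_mul_le {I : Ideal R} {F : ℕ → Ideal R}
    (hF : ∀ ℓ, I * F ℓ ≤ F (ℓ + 1)) (m ℓ : ℕ) : I ^ m * F ℓ ≤ F (ℓ + m) := by
  induction m generalizing ℓ with
  | zero => simp
  | succ m ih =>
    calc I ^ (m + 1) * F ℓ = I ^ m * (I * F ℓ) := by rw [pow_succ, mul_assoc]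
      _ ≤ I ^ m * F (ℓ + 1) := mul_mono_right (hF ℓ)
      _ ≤ F (ℓ + (m + 1)) := by rw [← add_assoc, add_right_comm]; exact ih (ℓ + 1)

end Ideal

theorem gradedPiece_eq_span_image {k R : Type} [Field k] [CommRing R] [Algebra k R]
    {I A B : Ideal R} {S : Set R} (hI : ∀ f : R, ∃ c : k, f - algebraMap k R c ∈ I)
    (hS : S ⊆ A) (hA : A ≤ Ideal.span S ⊔ B) (hIA : I * A ≤ B) :
    gradedPiece k A B = Submodule.span k (Ideal.Quotient.mk B '' S) := by
  refine le_antisymm ?_ (Submodule.span_le.2 (Set.image_subset_iff.2 fun s hs =>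
    Ideal.mem_map_of_mem _ (hS hs)))
  have hsA : Ideal.span S ≤ A := Ideal.span_le.2 hS
  have hspan : ∀ s ∈ Ideal.span S,
      Ideal.Quotient.mk B s ∈ Submodule.span k (Ideal.Quotient.mk B '' S) := by
    intro s hs
    induction hs using Submodule.span_induction with
    | mem s hs => exact Submodule.subset_span ⟨s, hs, rfl⟩
    | zero => simp
    | add s t _ _ ihs iht => simpa using add_mem ihs iht
    | smul c s hs ih =>
      obtain ⟨c₀, hc⟩ := hI c
      -- `c` acts on `A / B` through `c₀`, since `I * A ≤ B`
      have hrest : Ideal.Quotient.mk B ((c - algebraMap k R c₀) * s) = 0 :=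
        Ideal.Quotient.eq_zero_iff_mem.2 (hIA (Ideal.mul_mem_mul hc (hsA hs)))
      have hcs : c • s = (c - algebraMap k R c₀) * s + algebraMap k R c₀ * s := by
        rw [smul_eq_mul]; ring
      rw [hcs, map_add, hrest, zero_add, map_mul, Ideal.Quotient.mk_algebraMap, ← Algebra.smul_def]
      exact Submodule.smul_mem _ c₀ ih
  intro ξ hξ
  obtain ⟨a, ha, rfl⟩ :=
    (Ideal.mem_map_iff_of_surjective _ Ideal.Quotient.mk_surjective).1 hξ
  obtain ⟨s, hs, b, hb, rfl⟩ := Submodule.mem_sup.1 (hA ha)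
  rw [map_add, Ideal.Quotient.eq_zero_iff_mem.2 hb, add_zero]
  exact hspan s hs

namespace CuspidalFiltration

open MvPowerSeries Finsupp

variable (k : Type) [Field k] (r : ℕ)

def zVars : Set (MvPowerSeries (Fin (r + 2)) k) := Set.range fun i : Fin r => X i.succ.succ

noncomputable def xPowIdeal (ℓ : ℕ) : Ideal (MvPowerSeries (Fin (r + 2)) k) :=
  Ideal.span ({X 0 ^ ℓ, X 1} ∪ zVars k r)

noncomputable def cuspColonIdeal (n : ℕ) : Ideal (MvPowerSeries (Fin (r + 2)) k) :=
  Ideal.span ({X 0 ^ n, X 0 * X 1, X 1 ^ 2} ∪ zVars k r)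

noncomputable def cuspIdeal (n : ℕ) : Ideal (MvPowerSeries (Fin (r + 2)) k) :=
  Ideal.span ({X 1 ^ 2 + X 0 ^ n, X 0 * X 1} ∪ zVars k r)

variable {k r}

theorem X_zero_pow_mem_xPowIdeal (ℓ : ℕ) : X 0 ^ ℓ ∈ xPowIdeal k r ℓ :=
  Ideal.subset_span (by simp)

theorem X_one_mem_xPowIdeal (ℓ : ℕ) : X 1 ∈ xPowIdeal k r ℓ :=
  Ideal.subset_span (by simp)

theorem zVars_subset_xPowIdeal (ℓ : ℕ) : zVars k r ⊆ xPowIdeal k r ℓ :=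
  fun _ hz => Ideal.subset_span (Or.inr hz)

theorem zVars_subset_cuspColonIdeal (n : ℕ) : zVars k r ⊆ cuspColonIdeal k r n :=
  fun _ hz => Ideal.subset_span (Or.inr hz)

theorem zVars_subset_cuspIdeal (n : ℕ) : zVars k r ⊆ cuspIdeal k r n :=
  fun _ hz => Ideal.subset_span (Or.inr hz)

theorem X_zero_mul_X_one_mem_cuspIdeal (n : ℕ) : X 0 * X 1 ∈ cuspIdeal k r n :=
  Ideal.subset_span (by simp)

theorem X_one_sq_add_X_zero_pow_mem_cuspIdeal (n : ℕ) : X 1 ^ 2 + X 0 ^ n ∈ cuspIdeal k r n :=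
  Ideal.subset_span (by simp)

theorem xPowIdeal_eq_span_monomial (ℓ : ℕ) :
    xPowIdeal k r ℓ = Ideal.span ((fun e => monomial e (1 : k)) ''
      ({single 0 ℓ, single 1 1} ∪ Set.range fun i : Fin r => single i.succ.succ 1)) := by
  simp only [xPowIdeal, zVars, Set.image_union, Set.image_insert_eq, Set.image_singleton,
    ← Set.range_comp, Function.comp_def, ← X_pow_eq, pow_one]

theorem cuspColonIdeal_eq_span_monomial (n : ℕ) :
    cuspColonIdeal k r n = Ideal.span ((fun e => monomial e (1 : k)) ''
      ({single 0 n, single 0 1 + single 1 1, single 1 2} ∪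
        Set.range fun i : Fin r => single i.succ.succ 1)) := by
  have hxy : monomial (single 0 1 + single 1 1) (1 : k) = X (0 : Fin (r + 2)) * X 1 := by
    rw [X_def, X_def, monomial_mul_monomial, one_mul]
  simp only [cuspColonIdeal, zVars, Set.image_union, Set.image_insert_eq, Set.image_singleton,
    ← Set.range_comp, Function.comp_def, hxy, ← X_pow_eq, pow_one]

theorem eq_single_zero_add_single_one {d : Fin (r + 2) →₀ ℕ}
    (hd : ∀ i : Fin r, d i.succ.succ = 0) :
    d = single 0 (d 0) + single 1 (d 1) := by
  ext s
  refine Fin.cases ?_ (Fin.cases ?_ fun i => ?_) s <;> simp [hd, (Fin.succ_succ_ne_one _).symm]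

theorem mem_xPowIdeal_iff {ℓ : ℕ} {f : MvPowerSeries (Fin (r + 2)) k} :
    f ∈ xPowIdeal k r ℓ ↔ ∀ a < ℓ, coeff (single 0 a) f = 0 := by
  rw [xPowIdeal_eq_span_monomial, mem_ideal_span_monomial_image ((Set.toFinite _))]
  constructor
  · intro hf a ha
    by_contra hne
    obtain ⟨e, he, hle⟩ := hf _ hne
    rcases he with (rfl | rfl) | ⟨i, rfl⟩ <;>
      simp [single_le_iff] at hle
    omega
  · intro hf d hd
    by_cases hz : ∃ i : Fin r, d i.succ.succ ≠ 0
    · obtain ⟨i, hi⟩ := hz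
      exact ⟨_, Or.inr ⟨i, rfl⟩, single_le_iff.2 (Nat.one_le_iff_ne_zero.2 hi)⟩
    push Not at hz
    rw [eq_single_zero_add_single_one hz] at hd ⊢
    by_cases hb : d 1 = 0
    · refine ⟨single 0 ℓ, Or.inl (Or.inl rfl), ?_⟩
      rw [hb, single_zero, add_zero] at hd ⊢
      exact single_le_single.2 (not_lt.1 fun ha => hd (hf _ ha))
    · exact ⟨single 1 1, Or.inl (Or.inr rfl),
        le_add_left (single_le_single.2 (Nat.one_le_iff_ne_zero.2 hb))⟩

theorem mem_cuspColonIdeal_iff {n : ℕ} (hn : n ≠ 0) {f : MvPowerSeries (Fin (r + 2)) k} :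
    f ∈ cuspColonIdeal k r n ↔
      (∀ a < n, coeff (single 0 a) f = 0) ∧ coeff (single 1 1) f = 0 := by
  rw [cuspColonIdeal_eq_span_monomial, mem_ideal_span_monomial_image ((Set.toFinite _))]
  constructor
  · intro hf
    refine ⟨fun a ha => ?_, ?_⟩ <;> by_contra hne <;> obtain ⟨e, he, hle⟩ := hf _ hne <;>
      rcases he with (rfl | rfl | rfl) | ⟨i, rfl⟩ <;>
      simp [Finsupp.le_def, Fin.forall_fin_succ, single_apply,
        (Fin.succ_ne_zero _).symm, (Fin.succ_succ_ne_one _).symm] at hle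
    all_goals omega
  · rintro ⟨hx, hy⟩ d hd
    by_cases hz : ∃ i : Fin r, d i.succ.succ ≠ 0
    · obtain ⟨i, hi⟩ := hz
      exact ⟨_, Or.inr ⟨i, rfl⟩, single_le_iff.2 (Nat.one_le_iff_ne_zero.2 hi)⟩
    push Not at hz
    rw [eq_single_zero_add_single_one hz] at hd ⊢
    generalize d 0 = a, d 1 = b at hd ⊢
    obtain hb | rfl | rfl : 2 ≤ b ∨ b = 1 ∨ b = 0 := by omega
    · exact ⟨single 1 2, Or.inl (Or.inr (Or.inr rfl)), le_add_left (single_le_single.2 hb)⟩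
    · rcases Nat.eq_zero_or_pos a with rfl | ha
      · simp [hy] at hd
      · exact ⟨_, Or.inl (Or.inr (Or.inl rfl)), add_le_add (single_le_single.2 ha) le_rfl⟩
    · rw [single_zero, add_zero] at hd ⊢
      exact ⟨_, Or.inl (Or.inl rfl), single_le_single.2 (not_lt.1 fun ha => hd (hx _ ha))⟩

theorem cuspIdeal_le_cuspColonIdeal (n : ℕ) : cuspIdeal k r n ≤ cuspColonIdeal k r n := by
  have gen : ∀ g ∈ ({X 0 ^ n, X 0 * X 1, X 1 ^ 2} ∪ zVars k r :
      Set (MvPowerSeries (Fin (r + 2)) k)), g ∈ cuspColonIdeal k r n :=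
    fun g hg => Ideal.subset_span hg
  refine Ideal.span_le.2 ?_
  rintro g ((rfl | rfl) | hz)
  · exact add_mem (gen _ (by simp)) (gen _ (by simp))
  · exact gen _ (by simp)
  · exact gen _ (Or.inr hz)

theorem coeff_single_zero_eq_coeff_single_one_of_mem_cuspIdeal {n : ℕ} (hn : n ≠ 0)
    {f : MvPowerSeries (Fin (r + 2)) k} (hf : f ∈ cuspIdeal k r n) :
    coeff (single 0 n) f = coeff (single 1 2) f := by
  induction hf using Submodule.span_induction with
  | mem g hg =>
    rcases hg with (rfl | rfl) | ⟨i, rfl⟩ <;>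
      simp [X_def, monomial_pow, coeff_monomial, monomial_mul_monomial,
        Finsupp.ext_iff, Fin.forall_fin_succ, single_apply, (Fin.succ_ne_zero _).symm, hn]
  | zero => simp
  | add g h _ _ hg hh => simp [hg, hh]
  | smul c g hgJ hg =>
    obtain ⟨hx, hy⟩ := (mem_cuspColonIdeal_iff hn).1 (cuspIdeal_le_cuspColonIdeal n hgJ)
    rw [smul_eq_mul, coeff_mul_of_coeff_lt_eq_zero, coeff_mul_of_coeff_lt_eq_zero, hg]
    · intro e he
      obtain ⟨b, hb, rfl⟩ := exists_eq_single_of_lt_single he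
      obtain rfl | rfl : b = 0 ∨ b = 1 := by omega
      · simpa using hx 0 (Nat.pos_of_ne_zero hn)
      · exact hy
    · intro e he
      obtain ⟨a, ha, rfl⟩ := exists_eq_single_of_lt_single he
      exact hx a ha

theorem xPowIdeal_one :
    xPowIdeal k r 1 = Ideal.span ({X 0, X 1} ∪ zVars k r) := by
  rw [xPowIdeal, pow_one]

theorem exists_sub_algebraMap_mem_xPowIdeal_one (f : MvPowerSeries (Fin (r + 2)) k) :
    ∃ c : k, f - algebraMap k _ c ∈ xPowIdeal k r 1 := by
  refine ⟨constantCoeff f, mem_xPowIdeal_iff.2 ?_⟩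
  intro a ha
  obtain rfl : a = 0 := by omega
  simp [MvPowerSeries.algebraMap_apply]

theorem xPowIdeal_one_mul_xPowIdeal (ℓ : ℕ) :
    xPowIdeal k r 1 * xPowIdeal k r ℓ ≤ xPowIdeal k r (ℓ + 1) := by
  rw [xPowIdeal_one, xPowIdeal, Ideal.span_mul_span']
  refine Ideal.span_le.2 (Set.mul_subset_iff.2 ?_)
  rintro s hs t ((rfl | rfl) | ht)
  · rcases hs with (rfl | rfl) | hs
    · rw [← pow_succ']; exact X_zero_pow_mem_xPowIdeal _
    · exact Ideal.mul_mem_right _ _ (X_one_mem_xPowIdeal _)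
    · exact Ideal.mul_mem_right _ _ (zVars_subset_xPowIdeal _ hs)
  · exact Ideal.mul_mem_left _ _ (X_one_mem_xPowIdeal _)
  · exact Ideal.mul_mem_left _ _ (zVars_subset_xPowIdeal _ ht)

theorem xPowIdeal_one_mul_xPowIdeal_pred {n : ℕ} (hn : 2 ≤ n) :
    xPowIdeal k r 1 * xPowIdeal k r (n - 1) ≤ cuspColonIdeal k r n := by
  have gen : ∀ g ∈ ({X 0 ^ n, X 0 * X 1, X 1 ^ 2} : Set (MvPowerSeries (Fin (r + 2)) k)),
      g ∈ cuspColonIdeal k r n := fun g hg => Ideal.subset_span (Or.inl hg)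
  obtain ⟨m, rfl⟩ : ∃ m, n = m + 2 := ⟨n - 2, by omega⟩
  rw [xPowIdeal_one, show m + 2 - 1 = m + 1 by omega, xPowIdeal, Ideal.span_mul_span']
  refine Ideal.span_le.2 (Set.mul_subset_iff.2 ?_)
  rintro s ((rfl | rfl) | hs) t ((rfl | rfl) | ht)
  all_goals first
    | exact Ideal.mul_mem_right _ _ (zVars_subset_cuspColonIdeal _ hs)
    | exact Ideal.mul_mem_left _ _ (zVars_subset_cuspColonIdeal _ ht)
    | skip
  · exact gen _ (by left; ring)
  · exact gen _ (by simp)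
  · rw [show (X 1 * X 0 ^ (m + 1) : MvPowerSeries (Fin (r + 2)) k) = X 0 * X 1 * X 0 ^ m by
      ring]
    exact Ideal.mul_mem_right _ _ (gen _ (by simp))
  · exact gen _ (by simp [sq])

theorem xPowIdeal_one_mul_cuspColonIdeal {n : ℕ} (hn : n ≠ 0) :
    xPowIdeal k r 1 * cuspColonIdeal k r n ≤ cuspIdeal k r n := by
  obtain ⟨m, rfl⟩ : ∃ m, n = m + 1 := ⟨n - 1, by omega⟩
  have hg := X_one_sq_add_X_zero_pow_mem_cuspIdeal (k := k) (r := r) (m + 1)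
  have hxy := X_zero_mul_X_one_mem_cuspIdeal (k := k) (r := r) (m + 1)
  rw [xPowIdeal_one, cuspColonIdeal, Ideal.span_mul_span']
  refine Ideal.span_le.2 (Set.mul_subset_iff.2 ?_)
  rintro s ((rfl | rfl) | hs) t ((rfl | rfl | rfl) | ht)
  all_goals first
    | exact Ideal.mul_mem_right _ _ (zVars_subset_cuspIdeal _ hs)
    | exact Ideal.mul_mem_left _ _ (zVars_subset_cuspIdeal _ ht)
    | exact Ideal.mul_mem_left _ _ hxy
    | skip
  · rw [show (X 0 * X 0 ^ (m + 1) : MvPowerSeries (Fin (r + 2)) k) =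
      X 0 * (X 1 ^ 2 + X 0 ^ (m + 1)) - X 0 * X 1 * X 1 by ring]
    exact sub_mem (Ideal.mul_mem_left _ _ hg) (Ideal.mul_mem_right _ _ hxy)
  · rw [show (X 0 * X 1 ^ 2 : MvPowerSeries (Fin (r + 2)) k) = X 0 * X 1 * X 1 by ring]
    exact Ideal.mul_mem_right _ _ hxy
  · rw [show (X 1 * X 0 ^ (m + 1) : MvPowerSeries (Fin (r + 2)) k) = X 0 * X 1 * X 0 ^ m by
      ring]
    exact Ideal.mul_mem_right _ _ hxy
  · rw [show (X 1 * X 1 ^ 2 : MvPowerSeries (Fin (r + 2)) k) =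
      X 1 * (X 1 ^ 2 + X 0 ^ (m + 1)) - X 0 * X 1 * X 0 ^ m by ring]
    exact sub_mem (Ideal.mul_mem_left _ _ hg) (Ideal.mul_mem_right _ _ hxy)

variable (k r) in
/-- The paper's `I_ℓ` for `1 ≤ ℓ ≤ n + 1`, continued by `(x^ℓ, y, z)` below and by `J` above, so
that `I * cuspFiltration n ℓ ≤ cuspFiltration n (ℓ + 1)` holds for every `ℓ`. -/
noncomputable def cuspFiltration (n ℓ : ℕ) : Ideal (MvPowerSeries (Fin (r + 2)) k) :=
  if ℓ < n then xPowIdeal k r ℓ else if ℓ = n then cuspColonIdeal k r n else cuspIdeal k r n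

theorem cuspFiltration_of_lt {n ℓ : ℕ} (h : ℓ < n) : cuspFiltration k r n ℓ = xPowIdeal k r ℓ :=
  if_pos h

theorem cuspFiltration_self (n : ℕ) : cuspFiltration k r n n = cuspColonIdeal k r n := by
  simp [cuspFiltration]

theorem cuspFiltration_of_gt {n ℓ : ℕ} (h : n < ℓ) : cuspFiltration k r n ℓ = cuspIdeal k r n := by
  simp [cuspFiltration, h.not_gt, h.ne']

theorem xPowIdeal_one_mul_cuspFiltration_le {n : ℕ} (hn : 2 ≤ n) (ℓ : ℕ) :
    xPowIdeal k r 1 * cuspFiltration k r n ℓ ≤ cuspFiltration k r n (ℓ + 1) := by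
  rcases lt_trichotomy (ℓ + 1) n with h | h | h
  · rw [cuspFiltration_of_lt h, cuspFiltration_of_lt (by omega)]
    exact xPowIdeal_one_mul_xPowIdeal ℓ
  · subst h
    rw [cuspFiltration_self, cuspFiltration_of_lt (by omega)]
    simpa using xPowIdeal_one_mul_xPowIdeal_pred (k := k) (r := r) hn
  · rw [cuspFiltration_of_gt h]
    rcases (Nat.lt_succ_iff.1 h).eq_or_lt with rfl | h'
    · rw [cuspFiltration_self]; exact xPowIdeal_one_mul_cuspColonIdeal (by omega)
    · rw [cuspFiltration_of_gt h']; exact Ideal.mul_le_right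

theorem colon_le_xPowIdeal {n ℓ : ℕ} (hℓ : 1 ≤ ℓ) (hℓn : ℓ ≤ n) :
    (cuspIdeal k r n).colon ((xPowIdeal k r 1 ^ (n + 1 - ℓ) : Ideal _) : Set _) ≤
      xPowIdeal k r ℓ := by
  intro f hf
  have hfx : f * monomial (single 0 (n + 1 - ℓ)) 1 ∈ cuspIdeal k r n := by
    simpa [X_pow_eq, mul_comm] using Submodule.mem_colon.1 hf _
      (Ideal.pow_mem_pow (X_zero_pow_mem_xPowIdeal (k := k) (r := r) 1) (n + 1 - ℓ))
  rw [mem_xPowIdeal_iff]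
  intro a ha
  rw [← coeff_add_mul_monomial_one f (single 0 a) (single 0 (n + 1 - ℓ)), ← single_add]
  rcases (show a + (n + 1 - ℓ) ≤ n by omega).lt_or_eq with hlt | heq
  · exact ((mem_cuspColonIdeal_iff (by omega)).1 (cuspIdeal_le_cuspColonIdeal n hfx)).1 _ hlt
  · rw [heq, coeff_single_zero_eq_coeff_single_one_of_mem_cuspIdeal (by omega) hfx]
    refine coeff_mul_monomial_one_of_not_le f ?_
    rw [single_le_iff, single_apply, if_neg (by simp)]
    omega

theorem colon_le_cuspColonIdeal {n : ℕ} (hn : n ≠ 0) :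
    (cuspIdeal k r n).colon (xPowIdeal k r 1 : Set _) ≤ cuspColonIdeal k r n := by
  intro f hf
  have hfy : f * monomial (single 1 1) 1 ∈ cuspIdeal k r n := by
    simpa [X_def, mul_comm] using
      Submodule.mem_colon.1 hf _ (X_one_mem_xPowIdeal (k := k) (r := r) 1)
  have hx := colon_le_xPowIdeal (k := k) (r := r) (Nat.one_le_iff_ne_zero.2 hn) le_rfl
    (by simpa using hf)
  refine (mem_cuspColonIdeal_iff hn).2 ⟨mem_xPowIdeal_iff.1 hx, ?_⟩
  rw [← coeff_add_mul_monomial_one f (single 1 1) (single 1 1), ← single_add,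
    ← coeff_single_zero_eq_coeff_single_one_of_mem_cuspIdeal hn hfy]
  exact coeff_mul_monomial_one_of_not_le f (by simp [single_le_iff])

theorem colon_eq_cuspFiltration {n ℓ : ℕ} (hn : 2 ≤ n) (hℓ : 1 ≤ ℓ) (hℓn : ℓ ≤ n) :
    (cuspIdeal k r n).colon ((xPowIdeal k r 1 ^ (n + 1 - ℓ) : Ideal _) : Set _) =
      cuspFiltration k r n ℓ := by
  refine le_antisymm ?_ (Ideal.le_colon_of_mul_le ?_)
  · rcases hℓn.lt_or_eq with h | rfl
    · rw [cuspFiltration_of_lt h]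
      exact colon_le_xPowIdeal hℓ hℓn
    · rw [cuspFiltration_self, Nat.add_sub_cancel_left, pow_one]
      exact colon_le_cuspColonIdeal (by omega)
  · have := Ideal.pow_mul_le_of_forall_mul_le (F := cuspFiltration k r n)
      (xPowIdeal_one_mul_cuspFiltration_le hn) (n + 1 - ℓ) ℓ
    rwa [mul_comm, show ℓ + (n + 1 - ℓ) = n + 1 by omega,
      cuspFiltration_of_gt (ℓ := n + 1) (by omega)] at this

theorem gradedPiece_xPowIdeal (ℓ : ℕ) :
    gradedPiece k (xPowIdeal k r ℓ) (xPowIdeal k r (ℓ + 1)) =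
      Submodule.span k {Ideal.Quotient.mk (xPowIdeal k r (ℓ + 1)) (X 0 ^ ℓ)} := by
  rw [← Set.image_singleton]
  refine gradedPiece_eq_span_image exists_sub_algebraMap_mem_xPowIdeal_one
    (Set.singleton_subset_iff.2 (X_zero_pow_mem_xPowIdeal ℓ)) (Ideal.span_le.2 ?_)
    (xPowIdeal_one_mul_xPowIdeal ℓ)
  rintro g ((rfl | rfl) | hz)
  · exact Submodule.mem_sup_left (Ideal.subset_span rfl)
  · exact Submodule.mem_sup_right (X_one_mem_xPowIdeal _)
  · exact Submodule.mem_sup_right (zVars_subset_xPowIdeal _ hz)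

theorem X_zero_pow_notMem_xPowIdeal_succ (ℓ : ℕ) : X 0 ^ ℓ ∉ xPowIdeal k r (ℓ + 1) := fun h => by
  simpa [coeff_X_pow] using mem_xPowIdeal_iff.1 h ℓ (Nat.lt_succ_self ℓ)

theorem finrank_gradedPiece_xPowIdeal (ℓ : ℕ) :
    Module.finrank k (gradedPiece k (xPowIdeal k r ℓ) (xPowIdeal k r (ℓ + 1))) = 1 := by
  rw [gradedPiece_xPowIdeal]
  exact finrank_span_singleton
    (mt Ideal.Quotient.eq_zero_iff_mem.1 (X_zero_pow_notMem_xPowIdeal_succ ℓ))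

theorem gradedPiece_xPowIdeal_pred {n : ℕ} (hn : 2 ≤ n) :
    gradedPiece k (xPowIdeal k r (n - 1)) (cuspColonIdeal k r n) =
      Submodule.span k {Ideal.Quotient.mk (cuspColonIdeal k r n) (X 0 ^ (n - 1)),
        Ideal.Quotient.mk (cuspColonIdeal k r n) (X 1)} := by
  rw [← Set.image_pair]
  refine gradedPiece_eq_span_image exists_sub_algebraMap_mem_xPowIdeal_one
    (Set.insert_subset_iff.2 ⟨X_zero_pow_mem_xPowIdeal _,
      Set.singleton_subset_iff.2 (X_one_mem_xPowIdeal _)⟩) (Ideal.span_le.2 ?_)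
    (xPowIdeal_one_mul_xPowIdeal_pred hn)
  rintro g ((rfl | rfl) | hz)
  · exact Submodule.mem_sup_left (Ideal.subset_span (by simp))
  · exact Submodule.mem_sup_left (Ideal.subset_span (by simp))
  · exact Submodule.mem_sup_right (zVars_subset_cuspColonIdeal _ hz)

theorem linearIndependent_mk_X_zero_pow_pred_X_one {n : ℕ} (hn : 2 ≤ n) :
    LinearIndependent k ![Ideal.Quotient.mk (cuspColonIdeal k r n) (X 0 ^ (n - 1)),
      Ideal.Quotient.mk (cuspColonIdeal k r n) (X 1)] := by
  rw [LinearIndependent.pair_iff]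
  intro s t hst
  have hmem : s • X 0 ^ (n - 1) + t • X 1 ∈ cuspColonIdeal k r n := by
    rw [← Ideal.Quotient.eq_zero_iff_mem, map_add, ← Ideal.Quotient.mkₐ_eq_mk k, map_smul,
      map_smul]
    exact hst
  obtain ⟨hx, hy⟩ := (mem_cuspColonIdeal_iff (by omega)).1 hmem
  have hne : (single 0 (n - 1) : Fin (r + 2) →₀ ℕ) ≠ single 1 1 := by
    simp [single_eq_single_iff, -single_tsub]
  have h1 := hx (n - 1) (by omega)
  simp only [map_add, map_smul, coeff_X_pow, coeff_X, hne, hne.symm, if_true, if_false,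
    smul_eq_mul, mul_one, mul_zero, add_zero, zero_add] at h1 hy
  exact ⟨h1, hy⟩

theorem finrank_gradedPiece_xPowIdeal_pred {n : ℕ} (hn : 2 ≤ n) :
    Module.finrank k (gradedPiece k (xPowIdeal k r (n - 1)) (cuspColonIdeal k r n)) = 2 := by
  rw [gradedPiece_xPowIdeal_pred hn, ← Matrix.range_cons_cons_empty _ _ ![],
    finrank_span_eq_card (linearIndependent_mk_X_zero_pow_pred_X_one hn), Fintype.card_fin]

theorem gradedPiece_cuspColonIdeal {n : ℕ} (hn : n ≠ 0) :
    gradedPiece k (cuspColonIdeal k r n) (cuspIdeal k r n) =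
      Submodule.span k {Ideal.Quotient.mk (cuspIdeal k r n) (X 0 ^ n)} := by
  rw [← Set.image_singleton]
  refine gradedPiece_eq_span_image exists_sub_algebraMap_mem_xPowIdeal_one
    (Set.singleton_subset_iff.2 (Ideal.subset_span (by simp))) (Ideal.span_le.2 ?_)
    (xPowIdeal_one_mul_cuspColonIdeal hn)
  rintro g ((rfl | rfl | rfl) | hz)
  · exact Submodule.mem_sup_left (Ideal.subset_span rfl)
  · exact Submodule.mem_sup_right (X_zero_mul_X_one_mem_cuspIdeal n)
  · rw [← add_sub_cancel_right (X 1 ^ 2) (X 0 ^ n)]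
    exact sub_mem (Submodule.mem_sup_right (X_one_sq_add_X_zero_pow_mem_cuspIdeal n))
      (Submodule.mem_sup_left (Ideal.subset_span rfl))
  · exact Submodule.mem_sup_right (zVars_subset_cuspIdeal _ hz)

theorem X_zero_pow_notMem_cuspIdeal {n : ℕ} (hn : n ≠ 0) : X 0 ^ n ∉ cuspIdeal k r n := fun h => by
  simpa [coeff_X_pow, single_eq_single_iff, hn] using
    coeff_single_zero_eq_coeff_single_one_of_mem_cuspIdeal hn h

theorem finrank_gradedPiece_cuspColonIdeal {n : ℕ} (hn : n ≠ 0) :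
    Module.finrank k (gradedPiece k (cuspColonIdeal k r n) (cuspIdeal k r n)) = 1 := by
  rw [gradedPiece_cuspColonIdeal hn]
  exact finrank_span_singleton
    (mt Ideal.Quotient.eq_zero_iff_mem.1 (X_zero_pow_notMem_cuspIdeal hn))

end CuspidalFiltration

open CuspidalFiltration in
/-- The filtration `I_ℓ = J : I^{n+1−ℓ}` (with `I_{n+1} = J`) of the local model of a
`C_{2,n}` cuspidal structure satisfies `I·I_ℓ ⊆ I_{ℓ+1}`, and the graded pieces
`I_ℓ/I_{ℓ+1}` are `k`-vector spaces of dimensions `1, …, 1, 2, 1`, with the stated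
generators. -/
theorem stmt_4 (k : Type) [Field k] (n r : ℕ) (hn : 3 ≤ n)
    (x y : MvPowerSeries (Fin (r + 2)) k) (z : Fin r → MvPowerSeries (Fin (r + 2)) k)
    (hx : x = MvPowerSeries.X 0) (hy : y = MvPowerSeries.X 1)
    (hz : ∀ i : Fin r, z i = MvPowerSeries.X i.succ.succ)
    (I J : Ideal (MvPowerSeries (Fin (r + 2)) k))
    (hI : I = Ideal.span ({x, y} ∪ Set.range z))
    (hJ : J = Ideal.span ({y ^ 2 + x ^ n, x * y} ∪ Set.range z))
    (Iseq : ℕ → Ideal (MvPowerSeries (Fin (r + 2)) k))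
    (hIseq : ∀ ℓ : ℕ, 1 ≤ ℓ → ℓ ≤ n → Iseq ℓ = Submodule.colon J ((I ^ (n + 1 - ℓ) : Ideal (MvPowerSeries (Fin (r + 2)) k)) : Set (MvPowerSeries (Fin (r + 2)) k)))
    (hItop : Iseq (n + 1) = J) :
    (∀ ℓ : ℕ, 1 ≤ ℓ → ℓ ≤ n → I * Iseq ℓ ≤ Iseq (ℓ + 1)) ∧
    (∀ ℓ : ℕ, 1 ≤ ℓ → ℓ ≤ n - 2 →
      gradedPiece k (Iseq ℓ) (Iseq (ℓ + 1)) =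
        Submodule.span k {Ideal.Quotient.mk (Iseq (ℓ + 1)) (x ^ ℓ)} ∧
      Module.finrank k (gradedPiece k (Iseq ℓ) (Iseq (ℓ + 1))) = 1) ∧
    (gradedPiece k (Iseq (n - 1)) (Iseq n) =
        Submodule.span k {Ideal.Quotient.mk (Iseq n) (x ^ (n - 1)),
          Ideal.Quotient.mk (Iseq n) y} ∧
      Module.finrank k (gradedPiece k (Iseq (n - 1)) (Iseq n)) = 2) ∧
    Module.finrank k (gradedPiece k (Iseq n) (Iseq (n + 1))) = 1 := by
  obtain rfl : z = fun i => MvPowerSeries.X i.succ.succ := funext hz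
  subst hx hy
  obtain rfl : I = xPowIdeal k r 1 := hI.trans (xPowIdeal_one).symm
  obtain rfl : J = cuspIdeal k r n := hJ
  have hF : ∀ ℓ, 1 ≤ ℓ → ℓ ≤ n + 1 → Iseq ℓ = cuspFiltration k r n ℓ := by
    intro ℓ hℓ hℓn
    rcases hℓn.lt_or_eq with h | rfl
    · rw [hIseq ℓ hℓ (by omega), colon_eq_cuspFiltration (by omega) hℓ (by omega)]
    · rw [hItop, cuspFiltration_of_gt (by omega)]
  refine ⟨fun ℓ hℓ hℓn => ?_, fun ℓ hℓ hℓn => ?_, ?_, ?_⟩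
  · rw [hF ℓ hℓ (by omega), hF (ℓ + 1) (by omega) (by omega)]
    exact xPowIdeal_one_mul_cuspFiltration_le (by omega) ℓ
  · rw [hF ℓ hℓ (by omega), hF (ℓ + 1) (by omega) (by omega),
      cuspFiltration_of_lt (ℓ := ℓ) (by omega), cuspFiltration_of_lt (ℓ := ℓ + 1) (by omega)]
    exact ⟨gradedPiece_xPowIdeal ℓ, finrank_gradedPiece_xPowIdeal ℓ⟩
  · rw [hF (n - 1) (by omega) (by omega), hF n (by omega) (by omega),
      cuspFiltration_of_lt (ℓ := n - 1) (by omega), cuspFiltration_self]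
    exact ⟨gradedPiece_xPowIdeal_pred (by omega), finrank_gradedPiece_xPowIdeal_pred (by omega)⟩
  · rw [hF n (by omega) (by omega), hF (n + 1) (by omega) le_rfl, cuspFiltration_self,
      cuspFiltration_of_gt (by omega)]
    exact finrank_gradedPiece_cuspColonIdeal (by omega)
end

section
/- The quotient I₂²/(I₂·J₂) is a 1-dimensional k-vector space generated by the class of y². (This is the local form of the fact that the multiplication map K ⊗ K → I₂²/I₂J₂ is an isomorphism, used in the proof of the Lemma on C_{2,n} structures.) -/
namespace MvPowerSeries

section CommSemiring

variable {σ R : Type*} [CommSemiring R]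

theorem mem_span_X_image_of_coeff_eq_zero (s : Finset σ) (f : MvPowerSeries σ R)
    (hf : ∀ m : σ →₀ ℕ, (∀ i ∈ s, m i = 0) → coeff m f = 0) :
    f ∈ Ideal.span (X '' s) := by
  classical
  induction s using Finset.induction_on generalizing f with
  | empty => simpa [MvPowerSeries.ext_iff] using hf
  | insert a s _ ih =>
    let g : MvPowerSeries σ R := fun m => if m a = 0 then coeff m f else 0
    let h : MvPowerSeries σ R := fun m => if m a = 0 then 0 else coeff m f
    have hgh : f = g + h := by
      ext m
      change coeff m f = (if m a = 0 then coeff m f else 0) + (if m a = 0 then 0 else coeff m f)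
      split_ifs <;> simp
    have hg : g ∈ Ideal.span (X '' s) := ih g fun m hm => by
      change (if m a = 0 then coeff m f else 0) = 0
      split_ifs with ha
      · exact hf m (by simpa [ha] using hm)
      · rfl
    have hh : X a ∣ h := X_dvd_iff.2 fun m hm => by
      change (if m a = 0 then 0 else coeff m f) = 0
      simp [hm]
    rw [hgh, Finset.coe_insert, Set.image_insert_eq, Ideal.span_insert]
    exact add_mem (Ideal.mem_sup_right hg)
      (Ideal.mem_sup_left (Ideal.mem_span_singleton.2 hh))

theorem ker_constantCoeff_eq_span_range_X [Finite σ] :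
    RingHom.ker (constantCoeff (σ := σ) (R := R)) = Ideal.span (Set.range X) := by
  cases nonempty_fintype σ
  refine le_antisymm (fun f hf => ?_) (Ideal.span_le.2 ?_)
  · rw [← Set.image_univ, ← Finset.coe_univ]
    refine mem_span_X_image_of_coeff_eq_zero _ f fun m hm => ?_
    obtain rfl : m = 0 := Finsupp.ext fun i => hm i (Finset.mem_univ i)
    exact hf
  · rintro _ ⟨i, rfl⟩
    exact constantCoeff_X i

def weightedOrderIdeal (w : σ → ℕ) (n : ℕ∞) : Ideal (MvPowerSeries σ R) where
  carrier := {f | n ≤ f.weightedOrder w}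
  add_mem' ha hb := (le_min ha hb).trans (min_weightedOrder_le_add w)
  zero_mem' := by simp
  smul_mem' _ _ hf := (le_add_left hf).trans (le_weightedOrder_mul w)

variable {w : σ → ℕ}

theorem mem_weightedOrderIdeal {n : ℕ∞} {f : MvPowerSeries σ R} :
    f ∈ weightedOrderIdeal w n ↔ n ≤ f.weightedOrder w := Iff.rfl

theorem weightedOrderIdeal_anti {m n : ℕ∞} (h : m ≤ n) :
    weightedOrderIdeal (R := R) w n ≤ weightedOrderIdeal w m :=
  fun _ hf => h.trans hf

theorem X_mem_weightedOrderIdeal (i : σ) :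
    (X i : MvPowerSeries σ R) ∈ weightedOrderIdeal w (w i) := by
  classical
  refine le_weightedOrder w fun d hd => ?_
  rw [coeff_X, if_neg]
  rintro rfl
  simp [Finsupp.weight_single] at hd

theorem mul_mem_weightedOrderIdeal {f g : MvPowerSeries σ R} {m n : ℕ∞}
    (hf : f ∈ weightedOrderIdeal w m) (hg : g ∈ weightedOrderIdeal w n) :
    f * g ∈ weightedOrderIdeal w (m + n) :=
  (add_le_add hf hg).trans (le_weightedOrder_mul w)

theorem mul_le_weightedOrderIdeal {I J : Ideal (MvPowerSeries σ R)} {m n : ℕ∞}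
    (hI : I ≤ weightedOrderIdeal w m) (hJ : J ≤ weightedOrderIdeal w n) :
    I * J ≤ weightedOrderIdeal w (m + n) :=
  Ideal.mul_le.2 fun _ hf _ hg => mul_mem_weightedOrderIdeal (hI hf) (hJ hg)

end CommSemiring

theorem sub_C_constantCoeff_mul_mem {σ R : Type*} [CommRing R] [Finite σ]
    {B : Ideal (MvPowerSeries σ R)} {g : MvPowerSeries σ R} (hg : ∀ i, X i * g ∈ B)
    (f : MvPowerSeries σ R) : (f - C (constantCoeff f)) * g ∈ B := by
  have hspan : Ideal.span (Set.range X) ≤ B.colon {g} :=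
    Ideal.span_le.2 fun _ ⟨i, hi⟩ => Submodule.mem_colon_singleton.2 (hi ▸ hg i)
  have hf : f - C (constantCoeff f) ∈ RingHom.ker constantCoeff := by simp
  rw [ker_constantCoeff_eq_span_range_X] at hf
  exact Submodule.mem_colon_singleton.1 (hspan hf)

end MvPowerSeries

theorem Ideal.span_insert_pow_two_le {R : Type*} [CommSemiring R] {y : R} {S : Set R}
    {J : Ideal R} (hS : S ⊆ J) :
    span (insert y S) ^ 2 ≤ span (insert y S) * J ⊔ span {y ^ 2} := by
  set I := span (insert y S)
  have hI : I = span {y} ⊔ span S := span_insert y S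
  have hyI : span {y} ≤ I := hI ▸ le_sup_left
  have hSJ : span S ≤ J := span_le.2 hS
  calc I ^ 2 = span {y} * span {y} ⊔ span S * span {y} ⊔ I * span S := by
        rw [sq, ← sup_mul, ← hI, ← mul_sup, ← hI]
    _ ≤ span {y ^ 2} ⊔ I * J ⊔ I * J := by
        refine sup_le_sup (sup_le_sup ?_ ?_) (mul_mono_right hSJ)
        · rw [span_singleton_mul_span_singleton, sq]
        · rw [mul_comm]
          exact mul_mono hyI hSJ
    _ = I * J ⊔ span {y ^ 2} := by rw [sup_assoc, sup_idem, sup_comm]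

section GradedPiece

variable {k : Type} [Field k] {R : Type} [CommRing R] [Algebra k R] {A B : Ideal R} {g : R}

theorem gradedPiece_eq_span_singleton (hgA : g ∈ A) (hA : A ≤ B ⊔ Ideal.span {g})
    (hg : ∀ f : R, ∃ c : k, (f - algebraMap k R c) * g ∈ B) :
    gradedPiece k A B = Submodule.span k {Ideal.Quotient.mk B g} := by
  refine le_antisymm (fun u hu => ?_)
    (Submodule.span_le.2 (Set.singleton_subset_iff.2 (Ideal.mem_map_of_mem _ hgA)))
  have hu' : u ∈ Ideal.span {Ideal.Quotient.mk B g} := by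
    simpa [Ideal.map_sup, Ideal.map_span] using Ideal.map_mono (f := Ideal.Quotient.mk B) hA hu
  obtain ⟨v, rfl⟩ := Ideal.mem_span_singleton'.1 hu'
  obtain ⟨f, rfl⟩ := Ideal.Quotient.mk_surjective v
  obtain ⟨c, hc⟩ := hg f
  have : Ideal.Quotient.mk B f * Ideal.Quotient.mk B g = c • Ideal.Quotient.mk B g := by
    rw [Algebra.smul_def, IsScalarTower.algebraMap_apply k R (R ⧸ B),
      Ideal.Quotient.algebraMap_eq, ← map_mul, ← map_mul, Ideal.Quotient.eq, ← sub_mul]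
    exact hc
  rw [this]
  exact Submodule.smul_mem _ c (Submodule.mem_span_singleton_self _)

end GradedPiece

namespace CuspModel

open MvPowerSeries

variable (k : Type) [Field k] (r : ℕ)

noncomputable def I₂ : Ideal (MvPowerSeries (Fin (r + 2)) k) :=
  Ideal.span ({X 0 ^ 2, X 1} ∪ Set.range fun i : Fin r => X i.succ.succ)

noncomputable def J₂ : Ideal (MvPowerSeries (Fin (r + 2)) k) :=
  Ideal.span ({X 0 ^ 2, X 0 * X 1, X 1 ^ 2} ∪ Set.range fun i : Fin r => X i.succ.succ)

variable {k r}

theorem X_one_mem_I₂ : X 1 ∈ I₂ k r := Ideal.subset_span (by simp)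

theorem I₂_pow_two_le : I₂ k r ^ 2 ≤ I₂ k r * J₂ k r ⊔ Ideal.span {X 1 ^ 2} := by
  have h : I₂ k r =
      Ideal.span (insert (X 1) ({X 0 ^ 2} ∪ Set.range fun i : Fin r => X i.succ.succ)) := by
    rw [I₂]
    congr 1
    ext
    simp only [Set.mem_union, Set.mem_insert_iff, Set.mem_singleton_iff]
    tauto
  rw [h]
  refine Ideal.span_insert_pow_two_le (Set.union_subset ?_ ?_)
  · exact Set.singleton_subset_iff.2 (Ideal.subset_span (by simp))
  · exact Set.range_subset_iff.2 fun i => Ideal.subset_span (by simp)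

theorem X_one_mul_X_mem_J₂ (i : Fin (r + 2)) : X 1 * X i ∈ J₂ k r := by
  induction i using Fin.cases with
  | zero =>
    rw [mul_comm]
    exact Ideal.subset_span (by simp)
  | succ j =>
    induction j using Fin.cases with
    | zero =>
      rw [Fin.succ_zero_eq_one, ← sq]
      exact Ideal.subset_span (by simp)
    | succ i => exact Ideal.mul_mem_left _ _ (Ideal.subset_span (by simp))

def varWeight (r : ℕ) (i : Fin (r + 2)) : ℕ := if i = 1 then 1 else 2

theorem X_mul_X_mem_weightedOrderIdeal (i j : Fin (r + 2)) {n : ℕ∞}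
    (h : n ≤ varWeight r i + varWeight r j) :
    (X i * X j : MvPowerSeries (Fin (r + 2)) k) ∈ weightedOrderIdeal (varWeight r) n :=
  weightedOrderIdeal_anti h (mul_mem_weightedOrderIdeal (X_mem_weightedOrderIdeal i)
    (X_mem_weightedOrderIdeal j))

theorem I₂_le_weightedOrderIdeal : I₂ k r ≤ weightedOrderIdeal (varWeight r) 1 := by
  refine Ideal.span_le.2 ?_
  rintro _ ((rfl | rfl) | ⟨i, rfl⟩)
  · rw [sq]
    exact X_mul_X_mem_weightedOrderIdeal 0 0 (by norm_num [varWeight])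
  · exact X_mem_weightedOrderIdeal 1
  · exact weightedOrderIdeal_anti (by simp [varWeight, Fin.succ_succ_ne_one])
      (X_mem_weightedOrderIdeal _)

theorem J₂_le_weightedOrderIdeal : J₂ k r ≤ weightedOrderIdeal (varWeight r) 2 := by
  refine Ideal.span_le.2 ?_
  rintro _ ((rfl | rfl | rfl) | ⟨i, rfl⟩)
  · rw [sq]
    exact X_mul_X_mem_weightedOrderIdeal 0 0 (by norm_num [varWeight])
  · exact X_mul_X_mem_weightedOrderIdeal 0 1 (by norm_num [varWeight])
  · rw [sq]
    exact X_mul_X_mem_weightedOrderIdeal 1 1 (by norm_num [varWeight])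
  · exact weightedOrderIdeal_anti (by simp [varWeight, Fin.succ_succ_ne_one])
      (X_mem_weightedOrderIdeal _)

theorem X_mul_X_one_sq_mem_I₂_mul_J₂ (i : Fin (r + 2)) :
    X i * X 1 ^ 2 ∈ I₂ k r * J₂ k r := by
  rw [show (X i * X 1 ^ 2 : MvPowerSeries (Fin (r + 2)) k) = X 1 * (X 1 * X i) by ring]
  exact Ideal.mul_mem_mul X_one_mem_I₂ (X_one_mul_X_mem_J₂ i)

theorem X_one_sq_not_mem_I₂_mul_J₂ :
    (X 1 ^ 2 : MvPowerSeries (Fin (r + 2)) k) ∉ I₂ k r * J₂ k r := by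
  intro h
  have h3 := mul_le_weightedOrderIdeal I₂_le_weightedOrderIdeal J₂_le_weightedOrderIdeal h
  rw [mem_weightedOrderIdeal, X_pow_eq, weightedOrder_monomial_of_ne_zero _ one_ne_zero,
    Finsupp.weight_single] at h3
  norm_num [varWeight] at h3

theorem gradedPiece_eq_span_X_one_sq :
    gradedPiece k (I₂ k r ^ 2) (I₂ k r * J₂ k r) =
      Submodule.span k {Ideal.Quotient.mk (I₂ k r * J₂ k r) (X 1 ^ 2)} :=
  gradedPiece_eq_span_singleton (Ideal.pow_mem_pow X_one_mem_I₂ 2) I₂_pow_two_le fun f =>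
    ⟨constantCoeff f, by
      rw [← c_eq_algebraMap]
      exact sub_C_constantCoeff_mul_mem X_mul_X_one_sq_mem_I₂_mul_J₂ f⟩

theorem finrank_gradedPiece_eq_one :
    Module.finrank k (gradedPiece k (I₂ k r ^ 2) (I₂ k r * J₂ k r)) = 1 := by
  rw [gradedPiece_eq_span_X_one_sq]
  refine finrank_span_singleton ?_
  rw [Ne, Ideal.Quotient.eq_zero_iff_mem]
  exact X_one_sq_not_mem_I₂_mul_J₂

end CuspModel

theorem stmt_7_general (k : Type) [Field k] (r : ℕ)
    (x y : MvPowerSeries (Fin (r + 2)) k) (z : Fin r → MvPowerSeries (Fin (r + 2)) k)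
    (hx : x = MvPowerSeries.X 0) (hy : y = MvPowerSeries.X 1)
    (hz : ∀ i : Fin r, z i = MvPowerSeries.X i.succ.succ)
    (I₂ J₂ : Ideal (MvPowerSeries (Fin (r + 2)) k))
    (hI₂ : I₂ = Ideal.span ({x ^ 2, y} ∪ Set.range z))
    (hJ₂ : J₂ = Ideal.span ({x ^ 2, x * y, y ^ 2} ∪ Set.range z)) :
    gradedPiece k (I₂ ^ 2) (I₂ * J₂) =
      Submodule.span k {Ideal.Quotient.mk (I₂ * J₂) (y ^ 2)} ∧
    Module.finrank k (gradedPiece k (I₂ ^ 2) (I₂ * J₂)) = 1 := by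
  obtain rfl : z = fun i => MvPowerSeries.X i.succ.succ := funext hz
  subst hx hy
  obtain rfl : I₂ = CuspModel.I₂ k r := hI₂
  obtain rfl : J₂ = CuspModel.J₂ k r := hJ₂
  exact ⟨CuspModel.gradedPiece_eq_span_X_one_sq, CuspModel.finrank_gradedPiece_eq_one⟩

/-- In the local model of a `C_{2,n}` cuspidal structure, the subquotient
`I₂²/(I₂·J₂)` is a 1-dimensional `k`-vector space generated by the class of `y²`
(local form of `K ⊗ K ≅ I₂²/I₂J₂`). -/
theorem stmt_7 (k : Type) [Field k] (n r : ℕ) (hn : 3 ≤ n)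
    (x y : MvPowerSeries (Fin (r + 2)) k) (z : Fin r → MvPowerSeries (Fin (r + 2)) k)
    (hx : x = MvPowerSeries.X 0) (hy : y = MvPowerSeries.X 1)
    (hz : ∀ i : Fin r, z i = MvPowerSeries.X i.succ.succ)
    (I J I₂ J₂ : Ideal (MvPowerSeries (Fin (r + 2)) k))
    (hI : I = Ideal.span ({x, y} ∪ Set.range z))
    (hJ : J = Ideal.span ({y ^ 2 + x ^ n, x * y} ∪ Set.range z))
    (hI₂ : I₂ = Ideal.span ({x ^ 2, y} ∪ Set.range z))
    (hJ₂ : J₂ = Ideal.span ({x ^ 2, x * y, y ^ 2} ∪ Set.range z)) :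
    gradedPiece k (I₂ ^ 2) (I₂ * J₂) =
      Submodule.span k {Ideal.Quotient.mk (I₂ * J₂) (y ^ 2)} ∧
    Module.finrank k (gradedPiece k (I₂ ^ 2) (I₂ * J₂)) = 1 :=
  stmt_7_general k r x y z hx hy hz I₂ J₂ hI₂ hJ₂
end

section
/- I^{n+1} ⊆ J but I^n ⊄ J. (Thus, in the notation of the paper, the integer m with I^m ⊄ J and I^{m+1} ⊆ J equals n for the local model of a cuspidal structure of type C_{3,n}.) -/
/-!
For `I^(n+1) ⊆ J`: the relations `x^(n+1) = x (y^p + x^n) - y^(p-1) · xy` and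
`y^(n+1) = y^(n-p+1) (y^p + x^n) - x^(n-1) y^(n-p) · xy` put the pure powers of degree `n+1`
in `J`, and every other monomial of degree `n+1` in `x, y, z` is a multiple of `xy` or of some `zᵢ`.

For `I^n ⊄ J`: the power series whose coefficients vanish on the exponents below `y^p` or `xⁿ`
form a (monomial) ideal containing `xy` and the `zᵢ`. Modulo it, every element of `J` is
`c (y^p + xⁿ)`, whose coefficients at `y^p` and at `xⁿ` are both `c(0)`; for `xⁿ` they are `0` and `1`.
-/

open Ideal Finsupp

theorem Ideal.sup_pow_succ_le {R : Type*} [CommSemiring R] (A B : Ideal R) (m : ℕ) :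
    (A ⊔ B) ^ (m + 1) ≤ A ^ (m + 1) ⊔ B ^ (m + 1) ⊔ A * B := by
  induction m with
  | zero => simp only [zero_add, pow_one]; exact le_sup_left
  | succ m ih =>
    have hA : A ^ (m + 1) ≤ A := pow_le_self m.succ_ne_zero
    have hB : B ^ (m + 1) ≤ B := pow_le_self m.succ_ne_zero
    rw [pow_succ]
    refine (mul_mono_left ih).trans ?_
    simp only [Ideal.sup_mul, Ideal.mul_sup, sup_le_iff, ← pow_succ]
    exact ⟨⟨⟨le_sup_left.trans le_sup_left,
      ((mul_mono_left hB).trans (mul_comm B A).le).trans le_sup_right⟩,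
      mul_le_left.trans le_sup_right⟩,
      ⟨(mul_mono_left hA).trans le_sup_right, le_sup_right.trans le_sup_left⟩,
      mul_le_left.trans le_sup_right⟩

section PowAddPow

variable {R : Type*} [CommRing R]

theorem pow_succ_mem_of_pow_add_pow_mem {J : Ideal R} {x y : R} {p n : ℕ} (hp : p ≠ 0)
    (hpn : p ≤ n) (hpow : y ^ p + x ^ n ∈ J) (hxy : x * y ∈ J) :
    x ^ (n + 1) ∈ J ∧ y ^ (n + 1) ∈ J := by
  obtain ⟨q, rfl⟩ := Nat.exists_eq_succ_of_ne_zero hp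
  obtain ⟨m, rfl⟩ := Nat.exists_eq_add_of_le hpn
  constructor
  · rw [show x ^ (q + 1 + m + 1) = x * (y ^ (q + 1) + x ^ (q + 1 + m)) - y ^ q * (x * y) by ring]
    exact sub_mem (J.mul_mem_left _ hpow) (J.mul_mem_left _ hxy)
  · rw [show y ^ (q + 1 + m + 1) =
        y ^ (m + 1) * (y ^ (q + 1) + x ^ (q + 1 + m)) - x ^ (q + m) * y ^ m * (x * y) by ring]
    exact sub_mem (J.mul_mem_left _ hpow) (J.mul_mem_left _ hxy)

theorem span_pair_sup_pow_succ_le (Z : Ideal R) (x y : R) {p n : ℕ} (hp : p ≠ 0)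
    (hpn : p ≤ n) :
    (span {x, y} ⊔ Z) ^ (n + 1) ≤ span {y ^ p + x ^ n, x * y} ⊔ Z := by
  have hpow : y ^ p + x ^ n ∈ span {y ^ p + x ^ n, x * y} ⊔ Z :=
    mem_sup_left (subset_span (by simp))
  have hxy : x * y ∈ span {y ^ p + x ^ n, x * y} ⊔ Z := mem_sup_left (subset_span (by simp))
  obtain ⟨hx, hy⟩ := pow_succ_mem_of_pow_add_pow_mem hp hpn hpow hxy
  have hpair : span {x, y} ^ (n + 1) ≤ span {y ^ p + x ^ n, x * y} ⊔ Z := by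
    rw [span_insert]
    refine (sup_pow_succ_le _ _ n).trans ?_
    simp only [span_singleton_pow, span_singleton_mul_span_singleton, sup_le_iff,
      span_singleton_le_iff_mem]
    exact ⟨⟨hx, hy⟩, hxy⟩
  refine (sup_pow_succ_le _ _ n).trans (sup_le (sup_le hpair ?_) ?_)
  · exact (pow_le_self n.succ_ne_zero).trans le_sup_right
  · exact mul_le_right.trans le_sup_right

end PowAddPow

namespace MvPowerSeries

variable {σ R : Type*} [CommSemiring R]

/-- The monomial ideal spanned by the monomials with exponent outside the lower set `D`. -/
def coeffVanishingIdeal (D : Set (σ →₀ ℕ)) (hD : IsLowerSet D) :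
    Ideal (MvPowerSeries σ R) where
  carrier := {f | ∀ e ∈ D, coeff e f = 0}
  zero_mem' := by simp
  add_mem' hf hg e he := by simp [hf e he, hg e he]
  smul_mem' c f hf e he := by
    classical
    rw [smul_eq_mul, coeff_mul]
    refine Finset.sum_eq_zero fun d hd => ?_
    rw [hf d.2 (hD (le_of_add_le_right (Finset.HasAntidiagonal.mem_antidiagonal.mp hd).le) he),
      mul_zero]

theorem monomial_mem_coeffVanishingIdeal {D : Set (σ →₀ ℕ)} (hD : IsLowerSet D) {e : σ →₀ ℕ}
    (he : e ∉ D) (a : R) : monomial e a ∈ coeffVanishingIdeal D hD := by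
  classical
  intro d hd
  rw [coeff_monomial, if_neg (ne_of_mem_of_not_mem hd he)]

theorem coeff_mul_monomial_add_monomial {a b : σ →₀ ℕ} (h : ¬ a ≤ b) (c : MvPowerSeries σ R) :
    coeff b (c * (monomial a 1 + monomial b 1)) = constantCoeff c := by
  rw [mul_comm, add_mul, map_add, coeff_monomial_mul, coeff_monomial_mul, if_neg h,
    if_pos le_rfl, tsub_self, one_mul, zero_add, coeff_zero_eq_constantCoeff_apply]

theorem X_pow_notMem_span_X_pow_add_X_pow [Nontrivial R] {i j : σ} (hij : i ≠ j) {s : Set σ}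
    (hi : i ∉ s) (hj : j ∉ s) {p n : ℕ} (hp : p ≠ 0) (hn : n ≠ 0) :
    (X i ^ n : MvPowerSeries σ R) ∉
      span {X j ^ p + X i ^ n, X i * X j} ⊔ span (X '' s) := by
  classical
  have hYX : ¬ single j p ≤ single i n := fun h => hp (by simpa [hij.symm] using h j)
  have hXY : ¬ single i n ≤ single j p := fun h => hn (by simpa [hij] using h i)
  let Q := coeffVanishingIdeal (R := R) (Set.Iic (single j p) ∪ Set.Iic (single i n))
    ((isLowerSet_Iic _).union (isLowerSet_Iic _))
  have hQ : span {X i * X j} ⊔ span (X '' s) ≤ Q := by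
    rw [sup_le_iff, span_singleton_le_iff_mem, span_le]
    constructor
    · rw [X_def, X_def, monomial_mul_monomial, one_mul]
      refine monomial_mem_coeffVanishingIdeal _ ?_ _
      rintro (h | h)
      · simpa [hij] using h i
      · simpa [hij.symm] using h j
    · rintro _ ⟨t, ht, rfl⟩
      refine monomial_mem_coeffVanishingIdeal _ ?_ _
      rintro (h | h)
      · simpa [ne_of_mem_of_not_mem ht hj] using h t
      · simpa [ne_of_mem_of_not_mem ht hi] using h t
  have hcoeff : ∀ f : MvPowerSeries σ R,
      f ∈ span {X j ^ p + X i ^ n, X i * X j} ⊔ span (X '' s) →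
      coeff (single j p) f = coeff (single i n) f := by
    intro f hf
    rw [Set.insert_eq, span_union, sup_assoc] at hf
    obtain ⟨c, q, hq, rfl⟩ := mem_span_singleton_sup.mp (sup_le_sup_left hQ _ hf)
    rw [X_pow_eq, X_pow_eq, map_add, map_add, hq _ (Or.inl Set.self_mem_Iic),
      hq _ (Or.inr Set.self_mem_Iic), coeff_mul_monomial_add_monomial hYX,
      add_comm (monomial (single j p) 1), coeff_mul_monomial_add_monomial hXY]
  intro hmem
  have h := hcoeff _ hmem
  rw [X_pow_eq, coeff_monomial, coeff_monomial, if_neg (fun h => hYX h.le), if_pos rfl] at h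
  exact zero_ne_one h

end MvPowerSeries

/-- For the local model `J = (y³ + xⁿ, xy, z₁, …, z_r)` of a cuspidal multiple
structure of type `C_{3,n}` (with `n ≥ 4`) on the smooth germ cut out by
`I = (x, y, z₁, …, z_r)` in `R = k[[x, y, z₁, …, z_r]]`, one has
`I^(n+1) ⊆ J` but `I^n ⊄ J`. -/
theorem stmt_11 (k : Type) [Field k] (n r : ℕ) (hn : 4 ≤ n)
    (x y : MvPowerSeries (Fin (r + 2)) k) (z : Fin r → MvPowerSeries (Fin (r + 2)) k)
    (hx : x = MvPowerSeries.X 0) (hy : y = MvPowerSeries.X 1)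
    (hz : ∀ i : Fin r, z i = MvPowerSeries.X i.succ.succ)
    (I J : Ideal (MvPowerSeries (Fin (r + 2)) k))
    (hI : I = Ideal.span ({x, y} ∪ Set.range z))
    (hJ : J = Ideal.span ({y ^ 3 + x ^ n, x * y} ∪ Set.range z)) :
    I ^ (n + 1) ≤ J ∧ ¬ I ^ n ≤ J := by
  rw [span_union] at hI hJ
  subst hI hJ
  refine ⟨span_pair_sup_pow_succ_le _ x y three_ne_zero (by omega), fun hle => ?_⟩
  have hxn := hle (pow_mem_pow (mem_sup_left (subset_span (Set.mem_insert x {y}))) n)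
  obtain rfl : z = MvPowerSeries.X ∘ fun i => i.succ.succ := funext hz
  subst hx hy
  rw [Set.range_comp] at hxn
  refine MvPowerSeries.X_pow_notMem_span_X_pow_add_X_pow (by simp) ?_ ?_ three_ne_zero
    (by omega) hxn
  · rintro ⟨t, ht⟩
    exact Fin.succ_ne_zero _ ht
  · rintro ⟨t, ht⟩
    exact Fin.succ_ne_zero _ (Fin.succ_injective _ ht)
end
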